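/- arXiv:2306.06187 — 3 statements merged into one kernel-verified Lean document; each statement's English description precedes it below -/
import Mathlib

section
/- Let ℓ > 0, C₁ ≥ 1, F ⊂ ℝ² compact with diam(F) ≤ C₁ℓ, and F̃ = F × [0,ℓ] ⊂ ℝ³. Then Cap₁(F̃) ≥ c(C₁) · ℓ / log(2C₁ℓ / Cap_L(F)). -/
open MeasureTheory Metric
open scoped ENNReal Classical

/-- The constant in the fundamental solution of `-Δ` in `ℝⁿ`. -/
noncomputable def newtKernelConst (n : ℕ) : ℝ≥0∞ :=
  ((n : ℝ≥0∞) - 2) * μH[(n : ℝ) - 1] (sphere (0 : EuclideanSpace ℝ (Fin n)) 1)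

/-- The energy `∬ c_n |x-y|^{-(n-2)} dμ(x) dμ(y)` of a measure on `ℝᵐ`. -/
noncomputable def newtEnergy (n : ℕ) {m : ℕ} (μ : Measure (EuclideanSpace ℝ (Fin m))) : ℝ≥0∞ :=
  ∫⁻ x, ∫⁻ y, newtKernelConst n * edist x y ^ (-((n : ℝ) - 2)) ∂μ ∂μ

/-- Newtonian capacity of homogeneity `n-2` of `F ⊂ ℝᵐ`.  In particular `newtCap 3` is the
capacity `Cap₁` in `ℝ³` with kernel `c|x|⁻¹`. -/
noncomputable def newtCap (n : ℕ) {m : ℕ} (F : Set (EuclideanSpace ℝ (Fin m))) : ℝ≥0∞ :=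
  (⨅ (μ : Measure (EuclideanSpace ℝ (Fin m))) (_ : IsProbabilityMeasure μ) (_ : μ Fᶜ = 0),
    newtEnergy n μ)⁻¹

/-- The logarithmic energy `∬ log(1/|x-y|) dμ dμ` (positive part minus negative part). -/
noncomputable def logEnergy (μ : Measure (EuclideanSpace ℝ (Fin 2))) : EReal :=
  ((∫⁻ p : EuclideanSpace ℝ (Fin 2) × EuclideanSpace ℝ (Fin 2),
      (if p.1 = p.2 then ⊤ else ENNReal.ofReal (Real.log (1 / dist p.1 p.2)))
      ∂(μ.prod μ) : ℝ≥0∞) : EReal)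
  - ((∫⁻ p : EuclideanSpace ℝ (Fin 2) × EuclideanSpace ℝ (Fin 2),
      ENNReal.ofReal (Real.log (dist p.1 p.2)) ∂(μ.prod μ) : ℝ≥0∞) : EReal)

/-- Robin constant `V(F) = inf_{μ ∈ M₁(F)} ∬ log(1/|x-y|) dμ dμ = 2π / Cap₀(F)`. -/
noncomputable def wienerV (F : Set (EuclideanSpace ℝ (Fin 2))) : EReal :=
  ⨅ (μ : Measure (EuclideanSpace ℝ (Fin 2))) (_ : IsProbabilityMeasure μ) (_ : μ Fᶜ = 0),
    logEnergy μ

/-- Logarithmic capacity `Cap_L(F) = exp(−2π/Cap₀(F)) = exp(−V(F))`. -/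
noncomputable def logCap (F : Set (EuclideanSpace ℝ (Fin 2))) : ℝ :=
  if wienerV F = ⊤ then 0 else Real.exp (-(wienerV F).toReal)

/-- The cylinder `F̃ = F × [0,ℓ] ⊂ ℝ³` over `F ⊂ ℝ²`. -/
def cylSet (F : Set (EuclideanSpace ℝ (Fin 2))) (ℓ : ℝ) : Set (EuclideanSpace ℝ (Fin 3)) :=
  {y | (WithLp.toLp 2 (fun i : Fin 2 => y i.castSucc) : EuclideanSpace ℝ (Fin 2)) ∈ F ∧
       y (Fin.last 2) ∈ Set.Icc 0 ℓ}

open Real Set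

noncomputable def sphParam : (Fin 2 → ℝ) → EuclideanSpace ℝ (Fin 3) :=
  fun v => (WithLp.equiv 2 (Fin 3 → ℝ)).symm
    ![Real.sin (v 0) * Real.cos (v 1), Real.sin (v 0) * Real.sin (v 1), Real.cos (v 0)]


lemma lipschitzWith_sin' : LipschitzWith 1 Real.sin := by
  apply lipschitzWith_of_nnnorm_deriv_le Real.differentiable_sin
  intro x
  rw [Real.deriv_sin]
  rw [← NNReal.coe_le_coe, coe_nnnorm, Real.norm_eq_abs, NNReal.coe_one]
  exact Real.abs_cos_le_one x

lemma lipschitzWith_cos' : LipschitzWith 1 Real.cos := by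
  apply lipschitzWith_of_nnnorm_deriv_le Real.differentiable_cos
  intro x
  rw [Real.deriv_cos']
  rw [← NNReal.coe_le_coe, coe_nnnorm, Real.norm_eq_abs, NNReal.coe_one, abs_neg]
  exact Real.abs_sin_le_one x

lemma abs_mul_trig_sub (f g : ℝ → ℝ) (hf : LipschitzWith 1 f) (hg : LipschitzWith 1 g)
    (hfb : ∀ x, |f x| ≤ 1) (hgb : ∀ x, |g x| ≤ 1) (a a' b b' : ℝ) :
    |f a * g b - f a' * g b'| ≤ |a - a'| + |b - b'| := by
  have h1 : f a * g b - f a' * g b' = (f a - f a') * g b + f a' * (g b - g b') := by ring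
  have h2 := hf.dist_le_mul a a'
  have h3 := hg.dist_le_mul b b'
  simp only [Real.dist_eq, NNReal.coe_one, one_mul] at h2 h3
  calc |f a * g b - f a' * g b'| ≤ |(f a - f a') * g b| + |f a' * (g b - g b')| := by
        rw [h1]; exact abs_add_le _ _
    _ ≤ |f a - f a'| * 1 + 1 * |g b - g b'| := by
        rw [abs_mul, abs_mul]
        gcongr
        · exact hgb b
        · exact hfb a'
    _ ≤ |a - a'| + |b - b'| := by rw [mul_one, one_mul]; exact add_le_add h2 h3

lemma sphParam_lipschitz : LipschitzWith 4 sphParam := by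
  apply LipschitzWith.of_dist_le_mul
  intro x y
  have hD : ∀ i, |x i - y i| ≤ dist x y := by
    intro i
    have := dist_le_pi_dist x y i
    rwa [Real.dist_eq] at this
  have hcoord : ∀ i : Fin 3, dist (sphParam x i) (sphParam y i) ≤ 2 * dist x y := by
    intro i
    fin_cases i <;>
      simp only [sphParam, WithLp.equiv_symm_apply, PiLp.toLp_apply, Matrix.cons_val_zero, Matrix.cons_val_one,
        Matrix.head_cons, Matrix.cons_val_two, Matrix.tail_cons, Real.dist_eq]
    · calc |Real.sin (x 0) * Real.cos (x 1) - Real.sin (y 0) * Real.cos (y 1)|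
          ≤ |x 0 - y 0| + |x 1 - y 1| :=
            abs_mul_trig_sub _ _ lipschitzWith_sin' lipschitzWith_cos'
              Real.abs_sin_le_one Real.abs_cos_le_one _ _ _ _
        _ ≤ dist x y + dist x y := add_le_add (hD 0) (hD 1)
        _ = 2 * dist x y := by ring
    · calc |Real.sin (x 0) * Real.sin (x 1) - Real.sin (y 0) * Real.sin (y 1)|
          ≤ |x 0 - y 0| + |x 1 - y 1| :=
            abs_mul_trig_sub _ _ lipschitzWith_sin' lipschitzWith_sin'
              Real.abs_sin_le_one Real.abs_sin_le_one _ _ _ _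
        _ ≤ dist x y + dist x y := add_le_add (hD 0) (hD 1)
        _ = 2 * dist x y := by ring
    · have h1 : |Real.cos (x 0) - Real.cos (y 0)| ≤ |x 0 - y 0| := by
        have := lipschitzWith_cos'.dist_le_mul (x 0) (y 0)
        simpa [Real.dist_eq] using this
      have h2 := hD 0
      have e1 : ![Real.sin (x 0) * Real.cos (x 1), Real.sin (x 0) * Real.sin (x 1),
          Real.cos (x 0)] ⟨2, by omega⟩ = Real.cos (x 0) := rfl
      have e2 : ![Real.sin (y 0) * Real.cos (y 1), Real.sin (y 0) * Real.sin (y 1),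
          Real.cos (y 0)] ⟨2, by omega⟩ = Real.cos (y 0) := rfl
      rw [e1, e2]
      nlinarith [dist_nonneg (x := x) (y := y)]
  rw [EuclideanSpace.dist_eq]
  have hsum : (∑ i, dist (sphParam x i) (sphParam y i) ^ 2) ≤ (4 * dist x y) ^ 2 := by
    have : ∀ i : Fin 3, dist (sphParam x i) (sphParam y i) ^ 2 ≤ (2 * dist x y) ^ 2 := by
      intro i
      have h := hcoord i
      nlinarith [dist_nonneg (x := sphParam x i) (y := sphParam y i)]
    calc (∑ i, dist (sphParam x i) (sphParam y i) ^ 2) ≤ ∑ _i : Fin 3, (2 * dist x y) ^ 2 :=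
          Finset.sum_le_sum fun i _ => this i
      _ = 3 * (2 * dist x y) ^ 2 := by simp [Finset.sum_const]
      _ ≤ (4 * dist x y) ^ 2 := by nlinarith [dist_nonneg (x := x) (y := y)]
  have : Real.sqrt (∑ i, dist (sphParam x i) (sphParam y i) ^ 2) ≤ 4 * dist x y := by
    have := Real.sqrt_le_sqrt hsum
    rwa [Real.sqrt_sq (by positivity)] at this
  simpa using this

lemma sphere_subset_sphParam_image :
    sphere (0 : EuclideanSpace ℝ (Fin 3)) 1 ⊆ sphParam '' (closedBall 0 4) := by
  intro y hy
  have hnorm : ‖y‖ = 1 := by rwa [mem_sphere_zero_iff_norm] at hy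
  have hsum : y 0 ^ 2 + y 1 ^ 2 + y 2 ^ 2 = 1 := by
    have h1 : Real.sqrt (∑ i, ‖y i‖ ^ 2) = 1 := by
      rw [← EuclideanSpace.norm_eq]; exact hnorm
    have h2 : (∑ i, ‖y i‖ ^ 2) = 1 := by
      have hnn : (0:ℝ) ≤ ∑ i, ‖y i‖ ^ 2 := by positivity
      nlinarith [Real.sq_sqrt hnn]
    have h3 : (∑ i : Fin 3, ‖y i‖ ^ 2) = y 0 ^ 2 + y 1 ^ 2 + y 2 ^ 2 := by
      rw [Fin.sum_univ_three]
      simp [Real.norm_eq_abs, sq_abs]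
    linarith [h3 ▸ h2]
  set z := y 2 with hz
  have hz1 : -1 ≤ z := by nlinarith
  have hz2 : z ≤ 1 := by nlinarith
  set θ := Real.arccos z with hθ
  have hcosθ : Real.cos θ = z := Real.cos_arccos hz1 hz2
  have hsinθ : Real.sin θ = Real.sqrt (y 0 ^ 2 + y 1 ^ 2) := by
    rw [hθ, Real.sin_arccos]
    congr 1
    nlinarith
  have hθ4 : |θ| ≤ 4 := by
    rw [abs_le]
    constructor
    · linarith [Real.arccos_nonneg z]
    · linarith [Real.arccos_le_pi z, Real.pi_le_four]
  by_cases h0 : y 0 ^ 2 + y 1 ^ 2 = 0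
  · have hy0 : y 0 = 0 := by nlinarith [sq_nonneg (y 0), sq_nonneg (y 1)]
    have hy1 : y 1 = 0 := by nlinarith [sq_nonneg (y 0), sq_nonneg (y 1)]
    refine ⟨![θ, 0], ?_, ?_⟩
    · rw [mem_closedBall, dist_pi_le_iff (by norm_num)]
      intro i
      fin_cases i <;> simp [Real.dist_eq]
      exact hθ4
    · have hs0 : Real.sin θ = 0 := by rw [hsinθ, hy0, hy1]; simp
      ext i
      fin_cases i <;>
        simp [sphParam, WithLp.equiv_symm_apply, PiLp.toLp_apply, hs0, hcosθ, hy0, hy1, hz]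
  · have hrpos : 0 < Real.sqrt (y 0 ^ 2 + y 1 ^ 2) := by
      apply Real.sqrt_pos.2
      rcases lt_or_eq_of_le (by positivity : (0:ℝ) ≤ y 0 ^ 2 + y 1 ^ 2) with h | h
      · exact h
      · exact absurd h.symm h0
    set r := Real.sqrt (y 0 ^ 2 + y 1 ^ 2) with hr
    set w : ℂ := ⟨y 0, y 1⟩ with hw
    have hwne : w ≠ 0 := by
      intro h
      rw [Complex.ext_iff] at h
      simp at h
      exact h0 (by rw [show y 0 = 0 from h.1, show y 1 = 0 from h.2]; ring)
    have habs : ‖w‖ = r := by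
      rw [Complex.norm_def, Complex.normSq_mk, hr]
      congr 1
      ring
    set φ := Complex.arg w with hφ
    have hcosφ : Real.cos φ = y 0 / r := by
      rw [hφ, Complex.cos_arg hwne, habs]
    have hsinφ : Real.sin φ = y 1 / r := by
      rw [hφ, Complex.sin_arg, habs]
    refine ⟨![θ, φ], ?_, ?_⟩
    · rw [mem_closedBall, dist_pi_le_iff (by norm_num)]
      intro i
      fin_cases i <;> simp [Real.dist_eq]
      · exact hθ4
      · linarith [Complex.abs_arg_le_pi w, Real.pi_le_four]
    · ext i
      fin_cases i <;>
        simp only [sphParam, WithLp.equiv_symm_apply, PiLp.toLp_apply, Matrix.cons_val_zero,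
          Matrix.cons_val_one, Matrix.head_cons]
      · show Real.sin θ * Real.cos φ = y 0
        rw [hsinθ, hcosφ]
        field_simp
      · show Real.sin θ * Real.sin φ = y 1
        rw [hsinθ, hsinφ]
        field_simp
      · show Real.cos θ = y 2
        rw [hcosθ]

lemma sphere3_hausdorff_lt_top :
    μH[(2:ℝ)] (sphere (0 : EuclideanSpace ℝ (Fin 3)) 1) < ⊤ := by
  have h1 : μH[(2:ℝ)] (sphere (0 : EuclideanSpace ℝ (Fin 3)) 1)
      ≤ μH[(2:ℝ)] (sphParam '' (closedBall 0 4)) :=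
    measure_mono sphere_subset_sphParam_image
  have h2 := sphParam_lipschitz.hausdorffMeasure_image_le (by norm_num : (0:ℝ) ≤ 2)
    (closedBall 0 4)
  have h3 : (μH[(2:ℝ)] : Measure (Fin 2 → ℝ)) = volume := by
    have := hausdorffMeasure_pi_real (ι := Fin 2)
    rwa [Fintype.card_fin, Nat.cast_ofNat] at this
  have h4 : μH[(2:ℝ)] (closedBall (0 : Fin 2 → ℝ) 4) < ⊤ := by
    rw [h3]
    exact (isCompact_closedBall _ _).measure_lt_top
  refine lt_of_le_of_lt (h1.trans h2) (ENNReal.mul_lt_top ?_ h4)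
  exact ENNReal.rpow_lt_top_of_nonneg (by norm_num) (by simp)

open MeasureTheory Metric Real Set
open scoped ENNReal

noncomputable def psiK (d : ℝ) (u : ℝ) : ℝ := if |u| ≤ d then 1/d else 1/|u|

lemma psiK_neg (d u : ℝ) : psiK d (-u) = psiK d u := by simp [psiK]

lemma lintegral_inv_Ioc {d M : ℝ} (hd : 0 < d) (hdM : d ≤ M) :
    ∫⁻ u in Set.Ioc d M, ENNReal.ofReal (1 / |u|) = ENNReal.ofReal (Real.log (M / d)) := by
  have hcong : ∫⁻ u in Set.Ioc d M, ENNReal.ofReal (1 / |u|)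
      = ∫⁻ u in Set.Ioc d M, ENNReal.ofReal (1 / u) := by
    apply setLIntegral_congr_fun measurableSet_Ioc
    intro u hu; dsimp only
    rw [abs_of_pos (hd.trans hu.1)]
  rw [hcong]
  have hint : IntegrableOn (fun u : ℝ => 1 / u) (Set.Ioc d M) := by
    apply IntegrableOn.mono_set (t := Set.Icc d M) _ Set.Ioc_subset_Icc_self
    apply ContinuousOn.integrableOn_Icc
    intro u hu
    exact (continuousAt_const.div continuousAt_id (ne_of_gt (hd.trans_le hu.1))).continuousWithinAt
  rw [← ofReal_integral_eq_lintegral_ofReal hint]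
  · congr 1
    rw [← intervalIntegral.integral_of_le hdM]
    exact integral_one_div (by
      intro h
      rcases Set.mem_uIcc.1 h with ⟨h1, _⟩ | ⟨_, h2⟩ <;> linarith)
  · filter_upwards [self_mem_ae_restrict measurableSet_Ioc] with u hu
    have := hd.trans hu.1
    positivity

lemma lintegral_psiK_le {d M : ℝ} (hd : 0 < d) (hdM : d ≤ M) :
    ∫⁻ u in Set.Icc (-M) M, ENNReal.ofReal (psiK d u)
      ≤ ENNReal.ofReal (2 + 2 * Real.log (M / d)) := by
  have hsub : Set.Icc (-M) M ⊆ Set.Ico (-M) (-d) ∪ (Set.Icc (-d) d ∪ Set.Ioc d M) := by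
    intro u hu
    rcases lt_or_ge u (-d) with h | h
    · exact Or.inl ⟨hu.1, h⟩
    rcases le_or_gt u d with h2 | h2
    · exact Or.inr (Or.inl ⟨h, h2⟩)
    · exact Or.inr (Or.inr ⟨h2, hu.2⟩)
  have hmid : ∫⁻ u in Set.Icc (-d) d, ENNReal.ofReal (psiK d u) = ENNReal.ofReal 2 := by
    have : ∫⁻ u in Set.Icc (-d) d, ENNReal.ofReal (psiK d u)
        = ∫⁻ _u in Set.Icc (-d) d, ENNReal.ofReal (1/d) := by
      apply setLIntegral_congr_fun measurableSet_Icc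
      intro u hu; dsimp only
      rw [psiK, if_pos (abs_le.2 hu)]
    rw [this, setLIntegral_const, Real.volume_Icc, ← ENNReal.ofReal_mul (by positivity)]
    congr 1
    field_simp
    ring
  have hpos : ∫⁻ u in Set.Ioc d M, ENNReal.ofReal (psiK d u)
      = ENNReal.ofReal (Real.log (M / d)) := by
    rw [← lintegral_inv_Ioc hd hdM]
    apply setLIntegral_congr_fun measurableSet_Ioc
    intro u hu; dsimp only
    rw [psiK, if_neg]
    rw [abs_of_pos (hd.trans hu.1)]
    exact not_le.2 hu.1
  have hnegside : ∫⁻ u in Set.Ico (-M) (-d), ENNReal.ofReal (psiK d u)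
      = ENNReal.ofReal (Real.log (M / d)) := by
    have hemb : MeasurableEmbedding (fun x : ℝ => -x) :=
      (Homeomorph.neg ℝ).measurableEmbedding
    have hmp : MeasurePreserving (fun x : ℝ => -x) volume volume :=
      Measure.measurePreserving_neg _
    have := hmp.setLIntegral_comp_preimage_emb hemb
      (fun u => ENNReal.ofReal (psiK d u)) (Set.Ico (-M) (-d))
    have hpre : (fun x : ℝ => -x) ⁻¹' Set.Ico (-M) (-d) = Set.Ioc d M := by
      ext u
      simp only [Set.mem_preimage, Set.mem_Ico, Set.mem_Ioc]
      constructor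
      · rintro ⟨h1, h2⟩; constructor <;> linarith
      · rintro ⟨h1, h2⟩; constructor <;> linarith
    rw [hpre] at this
    simp only [psiK_neg] at this
    rw [← this, hpos]
  calc ∫⁻ u in Set.Icc (-M) M, ENNReal.ofReal (psiK d u)
      ≤ ∫⁻ u in Set.Ico (-M) (-d) ∪ (Set.Icc (-d) d ∪ Set.Ioc d M),
          ENNReal.ofReal (psiK d u) := lintegral_mono_set hsub
    _ ≤ (∫⁻ u in Set.Ico (-M) (-d), ENNReal.ofReal (psiK d u))
        + ((∫⁻ u in Set.Icc (-d) d, ENNReal.ofReal (psiK d u))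
           + ∫⁻ u in Set.Ioc d M, ENNReal.ofReal (psiK d u)) :=
        le_trans (lintegral_union_le _ _ _)
          (add_le_add_right (lintegral_union_le _ _ _) _)
    _ = ENNReal.ofReal (Real.log (M / d)) + (ENNReal.ofReal 2 + ENNReal.ofReal (Real.log (M / d)))
        := by rw [hmid, hpos, hnegside]
    _ ≤ ENNReal.ofReal (2 + 2 * Real.log (M / d)) := by
        have hlog : 0 ≤ Real.log (M / d) := Real.log_nonneg (by rw [le_div_iff₀ hd]; linarith)
        rw [← ENNReal.ofReal_add (by norm_num) hlog, ← ENNReal.ofReal_add hlog (by linarith)]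
        apply ENNReal.ofReal_le_ofReal
        linarith

lemma inner_slice_le {d s ℓ M : ℝ} (hd : 0 < d) (hl : 0 < ℓ) (hs : s ∈ Set.Icc 0 ℓ)
    (hdM : d ≤ M) (hlM : ℓ ≤ M) :
    ∫⁻ t in Set.Icc 0 ℓ, min (ENNReal.ofReal d)⁻¹ (edist s t)⁻¹
      ≤ ENNReal.ofReal (2 + 2 * Real.log (M / d)) := by
  have hptwise : ∀ t : ℝ, min (ENNReal.ofReal d)⁻¹ (edist s t)⁻¹
      ≤ ENNReal.ofReal (psiK d (t - s)) := by
    intro t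
    rw [psiK]
    split_ifs with h
    · refine (min_le_left _ _).trans ?_
      rw [one_div, ENNReal.ofReal_inv_of_pos hd]
    · push_neg at h
      refine (min_le_right _ _).trans ?_
      rw [edist_dist, Real.dist_eq, abs_sub_comm, one_div,
        ENNReal.ofReal_inv_of_pos (hd.trans h)]
  calc ∫⁻ t in Set.Icc 0 ℓ, min (ENNReal.ofReal d)⁻¹ (edist s t)⁻¹
      ≤ ∫⁻ t in Set.Icc 0 ℓ, ENNReal.ofReal (psiK d (t - s)) :=
        lintegral_mono fun t => hptwise t
    _ = ∫⁻ u in Set.Icc (-s) (ℓ - s), ENNReal.ofReal (psiK d u) := by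
        have hemb : MeasurableEmbedding (fun x : ℝ => x + s) :=
          (Homeomorph.addRight s).measurableEmbedding
        have hmp : MeasurePreserving (fun x : ℝ => x + s) volume volume :=
          measurePreserving_add_right volume s
        have := hmp.setLIntegral_comp_preimage_emb hemb
          (fun t => ENNReal.ofReal (psiK d (t - s))) (Set.Icc 0 ℓ)
        rw [← this]
        have hpre : (fun x : ℝ => x + s) ⁻¹' Set.Icc 0 ℓ = Set.Icc (-s) (ℓ - s) := by
          ext u
          simp only [Set.mem_preimage, Set.mem_Icc]
          constructor
          · rintro ⟨h1, h2⟩; constructor <;> linarith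
          · rintro ⟨h1, h2⟩; constructor <;> linarith
        rw [hpre]
        congr 1
        funext u
        simp
    _ ≤ ∫⁻ u in Set.Icc (-M) M, ENNReal.ofReal (psiK d u) := by
        apply lintegral_mono_set
        apply Set.Icc_subset_Icc <;> rcases hs with ⟨h1, h2⟩ <;> linarith
    _ ≤ ENNReal.ofReal (2 + 2 * Real.log (M / d)) := lintegral_psiK_le hd hdM

/-! ### EReal helpers -/

lemma ennreal_coe_toReal {B : ℝ≥0∞} (hB : B ≠ ⊤) : (B : EReal) = ((B.toReal : ℝ) : EReal) := by
  conv_lhs => rw [← ENNReal.ofReal_toReal hB]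
  rw [EReal.coe_ennreal_ofReal, max_eq_left ENNReal.toReal_nonneg]

/-! ### lower bounds on logarithmic energy -/

section LowerBound

variable {F : Set (EuclideanSpace ℝ (Fin 2))} {μ : Measure (EuclideanSpace ℝ (Fin 2))}

lemma prod_mem_ae [IsProbabilityMeasure μ] (hμ : μ Fᶜ = 0) :
    ∀ᵐ p ∂(μ.prod μ), p.1 ∈ F ∧ p.2 ∈ F := by
  have h : (μ.prod μ) ((F ×ˢ F)ᶜ) = 0 := by
    rw [Set.compl_prod_eq_union]
    apply le_antisymm _ zero_le
    refine le_trans (measure_union_le _ _) ?_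
    rw [Measure.prod_prod, Measure.prod_prod, hμ]
    simp
  have := measure_eq_zero_iff_ae_notMem.1 h
  filter_upwards [this] with p hp
  have : p ∈ F ×ˢ F := not_not.1 hp
  exact ⟨this.1, this.2⟩

lemma lintegralB_le [IsProbabilityMeasure μ] (hμ : μ Fᶜ = 0) {D : ℝ}
    (hdiam : ∀ x ∈ F, ∀ y ∈ F, dist x y ≤ D) :
    (∫⁻ p, ENNReal.ofReal (Real.log (dist p.1 p.2)) ∂(μ.prod μ))
      ≤ ENNReal.ofReal (max (Real.log D) 0) := by
  calc (∫⁻ p, ENNReal.ofReal (Real.log (dist p.1 p.2)) ∂(μ.prod μ))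
      ≤ ∫⁻ _p, ENNReal.ofReal (max (Real.log D) 0) ∂(μ.prod μ) := by
        apply lintegral_mono_ae
        filter_upwards [prod_mem_ae hμ] with p hp
        apply ENNReal.ofReal_le_ofReal
        rcases eq_or_lt_of_le (dist_nonneg (x := p.1) (y := p.2)) with h | h
        · rw [← h, Real.log_zero]; exact le_max_right _ _
        · exact le_max_of_le_left (Real.log_le_log h (hdiam _ hp.1 _ hp.2))
    _ = ENNReal.ofReal (max (Real.log D) 0) := by
        rw [lintegral_const, measure_univ, mul_one]

lemma logEnergy_ge [IsProbabilityMeasure μ] (hμ : μ Fᶜ = 0) {D : ℝ} (hD : 0 < D)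
    (hdiam : ∀ x ∈ F, ∀ y ∈ F, dist x y ≤ D) :
    ((-Real.log D : ℝ) : EReal) ≤ logEnergy μ := by
  set A := (∫⁻ p : EuclideanSpace ℝ (Fin 2) × EuclideanSpace ℝ (Fin 2),
      (if p.1 = p.2 then ⊤ else ENNReal.ofReal (Real.log (1 / dist p.1 p.2)))
      ∂(μ.prod μ)) with hA
  set B := (∫⁻ p : EuclideanSpace ℝ (Fin 2) × EuclideanSpace ℝ (Fin 2),
      ENNReal.ofReal (Real.log (dist p.1 p.2)) ∂(μ.prod μ)) with hB
  have hBle : B ≤ ENNReal.ofReal (max (Real.log D) 0) := lintegralB_le hμ hdiam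
  have hBne : B ≠ ⊤ := ne_top_of_le_ne_top ENNReal.ofReal_ne_top hBle
  have hle : logEnergy μ = (A : EReal) - (B : EReal) := rfl
  rw [hle]
  by_cases hAtop : A = ⊤
  · rw [hAtop, ennreal_coe_toReal hBne, EReal.coe_ennreal_top, EReal.top_sub_coe]
    exact le_top
  · rw [ennreal_coe_toReal hBne, ennreal_coe_toReal hAtop, ← EReal.coe_sub, EReal.coe_le_coe_iff]
    have hBr : B.toReal ≤ max (Real.log D) 0 := by
      refine ENNReal.toReal_mono ENNReal.ofReal_ne_top hBle |>.trans ?_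
      rw [ENNReal.toReal_ofReal (le_max_right _ _)]
    rcases le_or_gt 1 D with hD1 | hD1
    · have : 0 ≤ Real.log D := Real.log_nonneg hD1
      have hAnn : (0:ℝ) ≤ A.toReal := ENNReal.toReal_nonneg
      rw [max_eq_left this] at hBr
      linarith
    · -- D < 1 : B = 0 and A ≥ -log D
      have hBz : B.toReal ≤ 0 := by
        have : max (Real.log D) 0 = 0 := max_eq_right (le_of_lt (Real.log_neg hD hD1))
        rw [this] at hBr; exact hBr
      have hAge : ENNReal.ofReal (-Real.log D) ≤ A := by
        rw [hA]
        calc ENNReal.ofReal (-Real.log D)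
            = ∫⁻ _p, ENNReal.ofReal (-Real.log D) ∂(μ.prod μ) := by
              rw [lintegral_const, measure_univ, mul_one]
          _ ≤ _ := by
              apply lintegral_mono_ae
              filter_upwards [prod_mem_ae hμ] with p hp
              split_ifs with hpq
              · exact le_top
              · apply ENNReal.ofReal_le_ofReal
                rw [← Real.log_inv]
                have hd0 : 0 < dist p.1 p.2 :=
                  lt_of_le_of_ne dist_nonneg (fun h => hpq (by rwa [eq_comm, dist_eq_zero] at h))
                have hdD : dist p.1 p.2 ≤ D := hdiam _ hp.1 _ hp.2
                rw [one_div]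
                apply Real.log_le_log (by positivity)
                exact inv_anti₀ hd0 hdD
      have hAr : -Real.log D ≤ A.toReal := by
        have := ENNReal.toReal_mono hAtop hAge
        rwa [ENNReal.toReal_ofReal (by nlinarith [Real.log_neg hD hD1])] at this
      linarith

lemma wienerV_ge (F : Set (EuclideanSpace ℝ (Fin 2))) {D : ℝ} (hD : 0 < D)
    (hdiam : ∀ x ∈ F, ∀ y ∈ F, dist x y ≤ D) :
    ((-Real.log D : ℝ) : EReal) ≤ wienerV F := by
  rw [wienerV]
  refine le_iInf fun μ => le_iInf fun hP => le_iInf fun hμ => ?_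
  have : IsProbabilityMeasure μ := hP
  exact logEnergy_ge hμ hD hdiam

end LowerBound


section Construction

/-- The cylinder map `ℝ² × ℝ → ℝ³`. -/
def cylMap : (EuclideanSpace ℝ (Fin 2)) × ℝ → EuclideanSpace ℝ (Fin 3) :=
  fun p => WithLp.toLp 2 (Fin.snoc (fun i => p.1 i) p.2 : Fin 3 → ℝ)

lemma cylMap_continuous : Continuous cylMap := by
  apply (PiLp.continuous_toLp 2 (fun _ : Fin 3 => ℝ)).comp
  apply continuous_pi
  intro i
  refine Fin.lastCases ?_ ?_ i
  · simpa only [Fin.snoc_last] using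
      (continuous_snd : Continuous fun p : (EuclideanSpace ℝ (Fin 2)) × ℝ => p.2)
  · intro j
    simp only [Fin.snoc_castSucc]
    exact (continuous_apply j).comp ((PiLp.continuous_ofLp 2 _).comp continuous_fst)

lemma cylMap_measurable : Measurable cylMap := cylMap_continuous.measurable

lemma dist_cylMap_sq (p q : (EuclideanSpace ℝ (Fin 2)) × ℝ) :
    dist (cylMap p) (cylMap q) = Real.sqrt (dist p.1 q.1 ^ 2 + dist p.2 q.2 ^ 2) := by
  have hcs : ∀ r : (EuclideanSpace ℝ (Fin 2)) × ℝ, ∀ j : Fin 2,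
      cylMap r j.castSucc = r.1 j := by
    intro r j; simp [cylMap]
  have hls : ∀ r : (EuclideanSpace ℝ (Fin 2)) × ℝ, cylMap r (Fin.last 2) = r.2 := by
    intro r; simp only [cylMap, PiLp.toLp_apply, Fin.snoc_last]
  rw [EuclideanSpace.dist_eq]
  congr 1
  rw [Fin.sum_univ_castSucc]
  have h1 : (∑ j : Fin 2, dist (cylMap p j.castSucc) (cylMap q j.castSucc) ^ 2)
      = ∑ j : Fin 2, dist (p.1 j) (q.1 j) ^ 2 := by
    apply Finset.sum_congr rfl
    intro j _
    rw [hcs p j, hcs q j]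
  rw [h1, hls p, hls q, EuclideanSpace.dist_eq p.1 q.1, Real.sq_sqrt (by positivity)]

lemma edist_fst_le_cylMap (p q : (EuclideanSpace ℝ (Fin 2)) × ℝ) :
    edist p.1 q.1 ≤ edist (cylMap p) (cylMap q) := by
  rw [edist_dist, edist_dist]
  apply ENNReal.ofReal_le_ofReal
  rw [dist_cylMap_sq]
  calc dist p.1 q.1 = Real.sqrt (dist p.1 q.1 ^ 2) := (Real.sqrt_sq dist_nonneg).symm
    _ ≤ _ := Real.sqrt_le_sqrt (by nlinarith [dist_nonneg (x := p.2) (y := q.2)])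

lemma edist_snd_le_cylMap (p q : (EuclideanSpace ℝ (Fin 2)) × ℝ) :
    edist p.2 q.2 ≤ edist (cylMap p) (cylMap q) := by
  rw [edist_dist, edist_dist]
  apply ENNReal.ofReal_le_ofReal
  rw [dist_cylMap_sq]
  calc dist p.2 q.2 = Real.sqrt (dist p.2 q.2 ^ 2) := (Real.sqrt_sq dist_nonneg).symm
    _ ≤ _ := Real.sqrt_le_sqrt (by nlinarith [dist_nonneg (x := p.1) (y := q.1)])

lemma inv_edist_cylMap_le (p q : (EuclideanSpace ℝ (Fin 2)) × ℝ) :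
    (edist (cylMap p) (cylMap q))⁻¹ ≤ min (edist p.1 q.1)⁻¹ (edist p.2 q.2)⁻¹ :=
  le_min (ENNReal.inv_le_inv' (edist_fst_le_cylMap p q))
    (ENNReal.inv_le_inv' (edist_snd_le_cylMap p q))

end Construction


lemma cyl_inner_double {ℓ d M : ℝ} (hl : 0 < ℓ) (hd : 0 < d) (hdM : d ≤ M) (hlM : ℓ ≤ M) :
    (∫⁻ s, (∫⁻ t, min (ENNReal.ofReal d)⁻¹ (edist s t)⁻¹
        ∂((ENNReal.ofReal ℓ)⁻¹ • volume.restrict (Set.Icc 0 ℓ)))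
      ∂((ENNReal.ofReal ℓ)⁻¹ • volume.restrict (Set.Icc 0 ℓ)))
      ≤ (ENNReal.ofReal ℓ)⁻¹ * ENNReal.ofReal (2 + 2 * Real.log (M / d)) := by
  have hne0 : ENNReal.ofReal ℓ ≠ 0 := by
    simp [ENNReal.ofReal_eq_zero]; linarith
  set c := ENNReal.ofReal (2 + 2 * Real.log (M / d)) with hc
  rw [lintegral_smul_measure]
  apply mul_le_mul_right ?_ _
  calc (∫⁻ s in Set.Icc 0 ℓ, (∫⁻ t, min (ENNReal.ofReal d)⁻¹ (edist s t)⁻¹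
          ∂((ENNReal.ofReal ℓ)⁻¹ • volume.restrict (Set.Icc 0 ℓ))))
      ≤ ∫⁻ _s in Set.Icc 0 ℓ, (ENNReal.ofReal ℓ)⁻¹ * c := by
        apply setLIntegral_mono measurable_const
        intro s hs
        rw [lintegral_smul_measure]
        exact mul_le_mul_right (inner_slice_le hd hl hs hdM hlM) _
    _ = (ENNReal.ofReal ℓ)⁻¹ * c * ENNReal.ofReal ℓ := by
        rw [setLIntegral_const, Real.volume_Icc, sub_zero]
    _ = c * ((ENNReal.ofReal ℓ)⁻¹ * ENNReal.ofReal ℓ) := by ring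
    _ = c := by rw [ENNReal.inv_mul_cancel hne0 ENNReal.ofReal_ne_top, mul_one]

lemma two_mul_ofReal (x : ℝ) : (2:ℝ≥0∞) * ENNReal.ofReal x = ENNReal.ofReal (2*x) := by
  rw [ENNReal.ofReal_mul (by norm_num : (0:ℝ) ≤ 2)]
  norm_num

lemma ofReal_log_identity {t m : ℝ} (h : 0 ≤ 2 + 2*(m - t)) :
    ENNReal.ofReal (2 + 2*(m - t)) + 2 * ENNReal.ofReal t + ENNReal.ofReal (-(2 + 2*m))
      = 2 * ENNReal.ofReal (-t) + ENNReal.ofReal (2 + 2*m) := by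
  rw [two_mul_ofReal, two_mul_ofReal]
  rcases le_or_gt 0 t with ht | ht <;> rcases le_or_gt 0 (2 + 2*m) with hm | hm
  · rw [ENNReal.ofReal_of_nonpos (show -(2+2*m) ≤ 0 by linarith),
      ENNReal.ofReal_of_nonpos (show 2 * -t ≤ 0 by linarith),
      add_zero, zero_add, ← ENNReal.ofReal_add h (by linarith)]
    congr 1
    ring
  · exact absurd hm (by push_neg; linarith)
  · rw [ENNReal.ofReal_of_nonpos (show 2*t ≤ 0 by linarith),
      ENNReal.ofReal_of_nonpos (show -(2+2*m) ≤ 0 by linarith), add_zero, add_zero,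
      ← ENNReal.ofReal_add (by linarith : (0:ℝ) ≤ 2 * -t) hm]
    congr 1
    ring
  · rw [ENNReal.ofReal_of_nonpos (show 2*t ≤ 0 by linarith), add_zero,
      ENNReal.ofReal_of_nonpos (show 2+2*m ≤ 0 by linarith), add_zero,
      ← ENNReal.ofReal_add h (by linarith : (0:ℝ) ≤ -(2+2*m))]
    congr 1
    ring


section MainConstruction

open ENNReal

lemma exists_cyl_measure
    {C₁ ℓ : ℝ} (hC₁ : 1 ≤ C₁) (hl : 0 < ℓ)
    {F : Set (EuclideanSpace ℝ (Fin 2))} (hFc : IsCompact F)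
    (hdiam : Metric.diam F ≤ C₁ * ℓ)
    {v : ℝ} (hV : wienerV F = ((v : ℝ) : EReal)) :
    ∃ μ : Measure (EuclideanSpace ℝ (Fin 3)), IsProbabilityMeasure μ ∧ μ (cylSet F ℓ)ᶜ = 0 ∧
      (∫⁻ x, ∫⁻ y, (edist x y)⁻¹ ∂μ ∂μ)
        ≤ ENNReal.ofReal ((4 + 2 * (Real.log (2*(C₁*ℓ)) + v)) / ℓ) := by
  have hD0 : 0 < C₁ * ℓ := by nlinarith
  set M := 2 * (C₁ * ℓ) with hMdef
  have hM0 : 0 < M := by positivity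
  have hlM : ℓ ≤ M := by nlinarith
  have hDM : C₁ * ℓ ≤ M := by nlinarith
  have hdist : ∀ x ∈ F, ∀ y ∈ F, dist x y ≤ C₁ * ℓ := fun x hx y hy =>
    (dist_le_diam_of_mem hFc.isBounded hx hy).trans hdiam
  -- choose a near-optimal planar measure ν
  have hlt : wienerV F < ((v + 1 : ℝ) : EReal) := by
    rw [hV]
    exact_mod_cast (by linarith : v < v + 1)
  rw [wienerV] at hlt
  obtain ⟨ν, hlt⟩ := iInf_lt_iff.1 hlt
  obtain ⟨hPν, hlt⟩ := iInf_lt_iff.1 hlt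
  obtain ⟨hν0, hlt⟩ := iInf_lt_iff.1 hlt
  haveI := hPν
  simp only [logEnergy] at hlt
  set A := (∫⁻ p : EuclideanSpace ℝ (Fin 2) × EuclideanSpace ℝ (Fin 2),
      (if p.1 = p.2 then ⊤ else ENNReal.ofReal (Real.log (1 / dist p.1 p.2)))
      ∂(ν.prod ν)) with hAdef
  set B := (∫⁻ p : EuclideanSpace ℝ (Fin 2) × EuclideanSpace ℝ (Fin 2),
      ENNReal.ofReal (Real.log (dist p.1 p.2)) ∂(ν.prod ν)) with hBdef
  have hBle : B ≤ ENNReal.ofReal (max (Real.log (C₁ * ℓ)) 0) := lintegralB_le hν0 hdist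
  have hBne : B ≠ ⊤ := ne_top_of_le_ne_top ENNReal.ofReal_ne_top hBle
  have hAne : A ≠ ⊤ := by
    intro h
    rw [h, ennreal_coe_toReal hBne, EReal.coe_ennreal_top, EReal.top_sub_coe] at hlt
    exact (not_top_lt hlt)
  have hab : A.toReal - B.toReal < v + 1 := by
    rw [ennreal_coe_toReal hBne, ennreal_coe_toReal hAne, ← EReal.coe_sub,
      EReal.coe_lt_coe_iff] at hlt
    exact hlt
  -- the diagonal is null
  have hdiagmeas : MeasurableSet {p : EuclideanSpace ℝ (Fin 2) × EuclideanSpace ℝ (Fin 2) |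
      p.1 = p.2} := (isClosed_eq continuous_fst continuous_snd).measurableSet
  have hdiag : (ν.prod ν) {p : EuclideanSpace ℝ (Fin 2) × EuclideanSpace ℝ (Fin 2) |
      p.1 = p.2} = 0 := by
    by_contra hne
    apply hAne
    have hle' : ∫⁻ p, {p : EuclideanSpace ℝ (Fin 2) × EuclideanSpace ℝ (Fin 2) |
        p.1 = p.2}.indicator (fun _ => (⊤:ℝ≥0∞)) p ∂(ν.prod ν) ≤ A := by
      apply lintegral_mono
      intro p
      by_cases hp : p.1 = p.2 <;> simp [Set.indicator, hp]
    rw [lintegral_indicator hdiagmeas, setLIntegral_const, ENNReal.top_mul hne] at hle'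
    exact top_le_iff.1 hle'
  have haeF : ∀ᵐ p ∂(ν.prod ν), p.1 ∈ F ∧ p.2 ∈ F := prod_mem_ae hν0
  have haeNe : ∀ᵐ p ∂(ν.prod ν), p.1 ≠ p.2 := measure_eq_zero_iff_ae_notMem.1 hdiag
  -- the uniform measure on [0,ℓ]
  set lam : Measure ℝ := (ENNReal.ofReal ℓ)⁻¹ • volume.restrict (Set.Icc 0 ℓ) with hlamdef
  have hlne0 : ENNReal.ofReal ℓ ≠ 0 := by simp [ENNReal.ofReal_eq_zero]; linarith
  haveI hPlam : IsProbabilityMeasure lam := by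
    constructor
    rw [hlamdef, Measure.smul_apply, Measure.restrict_apply_univ, Real.volume_Icc, sub_zero,
      smul_eq_mul, ENNReal.inv_mul_cancel hlne0 ENNReal.ofReal_ne_top]
  -- the measure on the cylinder
  refine ⟨(( ν.prod lam).map cylMap), Measure.isProbabilityMeasure_map cylMap_measurable.aemeasurable,
    ?_, ?_⟩
  · -- null outside the cylinder
    have hproj : Measurable (fun y : EuclideanSpace ℝ (Fin 3) =>
        (WithLp.toLp 2 (fun i : Fin 2 => y i.castSucc) : EuclideanSpace ℝ (Fin 2))) := by
      have : Continuous (fun y : EuclideanSpace ℝ (Fin 3) =>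
          (WithLp.toLp 2 (fun i : Fin 2 => y i.castSucc) : EuclideanSpace ℝ (Fin 2))) :=
        (PiLp.continuous_toLp 2 _).comp (continuous_pi fun i => (continuous_apply _).comp (PiLp.continuous_ofLp 2 _))
      exact this.measurable
    have hcylmeas : MeasurableSet (cylSet F ℓ) := by
      have : cylSet F ℓ = (fun y : EuclideanSpace ℝ (Fin 3) =>
          (WithLp.toLp 2 (fun i : Fin 2 => y i.castSucc) : EuclideanSpace ℝ (Fin 2))) ⁻¹' F ∩
          (fun y : EuclideanSpace ℝ (Fin 3) => y (Fin.last 2)) ⁻¹' (Set.Icc 0 ℓ) := rfl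
      rw [this]
      exact (hproj (hFc.isClosed.measurableSet)).inter
        (((continuous_apply _).comp (PiLp.continuous_ofLp 2 _)).measurable measurableSet_Icc)
    rw [Measure.map_apply cylMap_measurable hcylmeas.compl, Set.preimage_compl]
    have hpre : cylMap ⁻¹' (cylSet F ℓ) = F ×ˢ Set.Icc 0 ℓ := by
      ext p
      have h1 : (WithLp.toLp 2 (fun i : Fin 2 => cylMap p i.castSucc) : EuclideanSpace ℝ (Fin 2)) = p.1 := by
        ext i; simp [cylMap]
      have h2 : cylMap p (Fin.last 2) = p.2 := by simp only [cylMap, PiLp.toLp_apply, Fin.snoc_last]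
      simp only [Set.mem_preimage, cylSet, Set.mem_setOf_eq, Set.mem_prod, h1, h2]
    rw [hpre]
    have hlamIcc : lam (Set.Icc 0 ℓ)ᶜ = 0 := by
      rw [hlamdef, Measure.smul_apply, Measure.restrict_apply measurableSet_Icc.compl,
        Set.compl_inter_self, measure_empty, smul_zero]
    apply le_antisymm _ zero_le
    rw [Set.compl_prod_eq_union]
    refine le_trans (measure_union_le _ _) ?_
    rw [Measure.prod_prod, Measure.prod_prod, hν0, hlamIcc]
    simp
  · -- the energy bound
    have c0ne : (ENNReal.ofReal ℓ)⁻¹ ≠ ⊤ := ENNReal.inv_ne_top.2 hlne0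
    set G : ((EuclideanSpace ℝ (Fin 2)) × ℝ) × ((EuclideanSpace ℝ (Fin 2)) × ℝ) → ℝ≥0∞ :=
      fun P => min (edist P.1.1 P.2.1)⁻¹ (edist P.1.2 P.2.2)⁻¹ with hGdef
    have hGmeas : Measurable G := by
      apply Measurable.min
      · exact (measurable_edist.comp ((measurable_fst.comp measurable_fst).prodMk
          (measurable_fst.comp measurable_snd))).inv
      · exact (measurable_edist.comp ((measurable_snd.comp measurable_fst).prodMk
          (measurable_snd.comp measurable_snd))).inv
    have hedistmeas : Measurable (fun P : (EuclideanSpace ℝ (Fin 3)) ×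
        (EuclideanSpace ℝ (Fin 3)) => (edist P.1 P.2)⁻¹) := measurable_edist.inv
    have hdistm : Measurable (fun p : EuclideanSpace ℝ (Fin 2) ×
        EuclideanSpace ℝ (Fin 2) => dist p.1 p.2) := measurable_dist
    set f1 : EuclideanSpace ℝ (Fin 2) × EuclideanSpace ℝ (Fin 2) → ℝ≥0∞ :=
      fun p => ENNReal.ofReal (2 + 2 * Real.log (M / dist p.1 p.2)) with hf1
    have hf1m : Measurable f1 :=
      (((Real.measurable_log.comp (measurable_const.div hdistm)).const_mul
        (2:ℝ)).const_add (2:ℝ)).ennreal_ofReal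
    -- the key bound on the planar double integral of f1
    set κ := 2 + 2 * Real.log M with hκ
    have hX : (∫⁻ p, f1 p ∂(ν.prod ν)) ≤ ENNReal.ofReal (4 + 2 * (Real.log M + v)) := by
      set f2 : EuclideanSpace ℝ (Fin 2) × EuclideanSpace ℝ (Fin 2) → ℝ≥0∞ :=
        fun p => ENNReal.ofReal (Real.log (dist p.1 p.2)) with hf2
      set f3 : EuclideanSpace ℝ (Fin 2) × EuclideanSpace ℝ (Fin 2) → ℝ≥0∞ :=
        fun p => ENNReal.ofReal (Real.log (1 / dist p.1 p.2)) with hf3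
      have hf2m : Measurable f2 := (Real.measurable_log.comp hdistm).ennreal_ofReal
      have hf3m : Measurable f3 :=
        (Real.measurable_log.comp (measurable_const.div hdistm)).ennreal_ofReal
      have hA3 : A = ∫⁻ p, f3 p ∂(ν.prod ν) := by
        rw [hAdef]
        apply lintegral_congr_ae
        filter_upwards [haeNe] with p hp
        rw [if_neg hp]
      have hkey : ∀ᵐ p ∂(ν.prod ν),
          f1 p + 2 * f2 p + ENNReal.ofReal (-κ) = 2 * f3 p + ENNReal.ofReal κ := by
        filter_upwards [haeF, haeNe] with p hp hne
        have hd0 : 0 < dist p.1 p.2 := dist_pos.2 hne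
        have hdM' : dist p.1 p.2 ≤ M := le_trans (hdist _ hp.1 _ hp.2) hDM
        have e1 : 2 + 2 * Real.log (M / dist p.1 p.2)
            = 2 + 2 * (Real.log M - Real.log (dist p.1 p.2)) := by
          rw [Real.log_div (ne_of_gt hM0) (ne_of_gt hd0)]
        have e3 : Real.log (1 / dist p.1 p.2) = -Real.log (dist p.1 p.2) := by
          rw [one_div, Real.log_inv]
        rw [hf1, hf2, hf3]
        simp only
        rw [e1, e3, hκ]
        exact ofReal_log_identity (by
          have := Real.log_le_log hd0 hdM'
          linarith)
      have hint : (∫⁻ p, f1 p ∂(ν.prod ν)) + 2 * B + ENNReal.ofReal (-κ)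
          = 2 * A + ENNReal.ofReal κ := by
        have h1 : (∫⁻ p, (f1 p + 2 * f2 p + ENNReal.ofReal (-κ)) ∂(ν.prod ν))
            = (∫⁻ p, f1 p ∂(ν.prod ν)) + 2 * B + ENNReal.ofReal (-κ) := by
          rw [lintegral_add_right _ measurable_const,
            lintegral_add_left hf1m, lintegral_const_mul _ hf2m, lintegral_const,
            measure_univ, mul_one, hBdef]
        have h2 : (∫⁻ p, (2 * f3 p + ENNReal.ofReal κ) ∂(ν.prod ν))
            = 2 * A + ENNReal.ofReal κ := by
          rw [lintegral_add_right _ measurable_const, lintegral_const_mul _ hf3m,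
            lintegral_const, measure_univ, mul_one, hA3]
        rw [← h1, ← h2]
        exact lintegral_congr_ae hkey
      have h2Ane : 2 * A + ENNReal.ofReal κ ≠ ⊤ :=
        ENNReal.add_ne_top.2 ⟨ENNReal.mul_ne_top (by simp) hAne, ENNReal.ofReal_ne_top⟩
      have hXne : (∫⁻ p, f1 p ∂(ν.prod ν)) ≠ ⊤ := by
        intro h
        apply h2Ane
        rw [← hint, h, top_add, top_add]
      -- pass to real numbers
      have htr := congrArg ENNReal.toReal hint
      rw [ENNReal.toReal_add (ENNReal.add_ne_top.2 ⟨hXne,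
          ENNReal.mul_ne_top (by simp) hBne⟩) ENNReal.ofReal_ne_top,
        ENNReal.toReal_add hXne (ENNReal.mul_ne_top (by simp) hBne),
        ENNReal.toReal_add (ENNReal.mul_ne_top (by simp) hAne) ENNReal.ofReal_ne_top,
        ENNReal.toReal_mul, ENNReal.toReal_mul] at htr
      have h2r : (2:ℝ≥0∞).toReal = 2 := by simp
      rw [h2r] at htr
      have hXr : (∫⁻ p, f1 p ∂(ν.prod ν)).toReal ≤ 4 + 2 * (Real.log M + v) := by
        rcases le_or_gt 0 κ with hκ0 | hκ0
        · rw [ENNReal.toReal_ofReal hκ0, ENNReal.ofReal_of_nonpos (by linarith)] at htr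
          simp only [ENNReal.toReal_zero] at htr
          have hBnn : (0:ℝ) ≤ B.toReal := ENNReal.toReal_nonneg
          rw [hκ] at hκ0 htr
          linarith
        · rw [ENNReal.toReal_ofReal (by linarith : (0:ℝ) ≤ -κ),
            ENNReal.ofReal_of_nonpos (le_of_lt hκ0)] at htr
          simp only [ENNReal.toReal_zero] at htr
          have hBnn : (0:ℝ) ≤ B.toReal := ENNReal.toReal_nonneg
          rw [hκ] at hκ0 htr
          linarith
      calc (∫⁻ p, f1 p ∂(ν.prod ν)) = ENNReal.ofReal (∫⁻ p, f1 p ∂(ν.prod ν)).toReal :=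
            (ENNReal.ofReal_toReal hXne).symm
        _ ≤ ENNReal.ofReal (4 + 2 * (Real.log M + v)) := ENNReal.ofReal_le_ofReal hXr
    -- now the chain of integral manipulations
    calc (∫⁻ x, ∫⁻ y, (edist x y)⁻¹ ∂((ν.prod lam).map cylMap) ∂((ν.prod lam).map cylMap))
        = ∫⁻ P, (edist P.1 P.2)⁻¹
            ∂(((ν.prod lam).map cylMap).prod ((ν.prod lam).map cylMap)) :=
          (lintegral_prod _ hedistmeas.aemeasurable).symm
      _ = ∫⁻ P, (edist (cylMap P.1) (cylMap P.2))⁻¹ ∂((ν.prod lam).prod (ν.prod lam)) := by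
          rw [Measure.map_prod_map _ _ cylMap_measurable cylMap_measurable,
            lintegral_map hedistmeas (cylMap_measurable.prodMap cylMap_measurable)]
          rfl
      _ ≤ ∫⁻ P, G P ∂((ν.prod lam).prod (ν.prod lam)) :=
          lintegral_mono fun P => inv_edist_cylMap_le P.1 P.2
      _ = ∫⁻ p, ∫⁻ q, G (p, q) ∂(ν.prod lam) ∂(ν.prod lam) :=
          lintegral_prod _ hGmeas.aemeasurable
      _ = ∫⁻ x, ∫⁻ s, ∫⁻ q, G ((x, s), q) ∂(ν.prod lam) ∂lam ∂ν :=
          lintegral_prod _ hGmeas.lintegral_prod_right'.aemeasurable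
      _ = ∫⁻ x, ∫⁻ y, ∫⁻ s, ∫⁻ t, G ((x, s), (y, t)) ∂lam ∂lam ∂ν ∂ν := by
          apply lintegral_congr
          intro x
          have hmeas2 : Measurable (fun w : (ℝ × EuclideanSpace ℝ (Fin 2)) × ℝ =>
              G ((x, w.1.1), (w.1.2, w.2))) := by
            apply hGmeas.comp
            exact ((measurable_const.prodMk (measurable_fst.comp
              measurable_fst)).prodMk ((measurable_snd.comp measurable_fst).prodMk
              measurable_snd))
          have e1 : ∀ s : ℝ, (∫⁻ q, G ((x, s), q) ∂(ν.prod lam))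
              = ∫⁻ y, ∫⁻ t, G ((x, s), (y, t)) ∂lam ∂ν := by
            intro s
            apply lintegral_prod
            apply Measurable.aemeasurable
            apply hGmeas.comp
            exact measurable_const.prodMk measurable_id
          rw [lintegral_congr e1]
          exact lintegral_lintegral_swap hmeas2.lintegral_prod_right'.aemeasurable
      _ ≤ ∫⁻ x, ∫⁻ y, (ENNReal.ofReal ℓ)⁻¹ * f1 (x, y) ∂ν ∂ν := by
          apply lintegral_mono_ae
          filter_upwards [Measure.ae_ae_of_ae_prod (haeF.and haeNe)] with x hx
          apply lintegral_mono_ae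
          filter_upwards [hx] with y hy
          obtain ⟨⟨hxF, hyF⟩, hne⟩ := hy
          have hd0 : 0 < dist x y := dist_pos.2 hne
          have hdM' : dist x y ≤ M := le_trans (hdist x hxF y hyF) hDM
          have hG4 : ∀ s t : ℝ, G ((x, s), (y, t))
              = min (ENNReal.ofReal (dist x y))⁻¹ (edist s t)⁻¹ := by
            intro s t
            rw [hGdef]
            simp only
            rw [edist_dist]
          calc (∫⁻ s, ∫⁻ t, G ((x, s), (y, t)) ∂lam ∂lam)
              = ∫⁻ s, ∫⁻ t, min (ENNReal.ofReal (dist x y))⁻¹ (edist s t)⁻¹ ∂lam ∂lam := by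
                apply lintegral_congr
                intro s
                apply lintegral_congr
                intro t
                exact hG4 s t
            _ ≤ (ENNReal.ofReal ℓ)⁻¹ * ENNReal.ofReal (2 + 2 * Real.log (M / dist x y)) :=
                cyl_inner_double hl hd0 hdM' hlM
            _ = (ENNReal.ofReal ℓ)⁻¹ * f1 (x, y) := rfl
      _ = (ENNReal.ofReal ℓ)⁻¹ * ∫⁻ p, f1 p ∂(ν.prod ν) := by
          have e2 : ∀ x, (∫⁻ y, (ENNReal.ofReal ℓ)⁻¹ * f1 (x, y) ∂ν)
              = (ENNReal.ofReal ℓ)⁻¹ * ∫⁻ y, f1 (x, y) ∂ν := fun x =>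
            lintegral_const_mul' _ _ c0ne
          rw [lintegral_congr e2, lintegral_const_mul' _ _ c0ne,
            ← lintegral_prod _ hf1m.aemeasurable]
      _ ≤ (ENNReal.ofReal ℓ)⁻¹ * ENNReal.ofReal (4 + 2 * (Real.log M + v)) :=
          mul_le_mul_right hX _
      _ = ENNReal.ofReal ((4 + 2 * (Real.log M + v)) / ℓ) := by
          rw [ENNReal.ofReal_div_of_pos hl, ENNReal.div_eq_inv_mul]

end MainConstruction

lemma newtKernelConst_three_ne_top : newtKernelConst 3 ≠ ⊤ := by
  rw [newtKernelConst]
  have h1 : ((3:ℕ) : ℝ) - 1 = (2:ℝ) := by norm_num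
  rw [h1]
  apply ENNReal.mul_ne_top
  · exact ne_top_of_le_ne_top (by norm_num : (3:ℝ≥0∞) ≠ ⊤) (tsub_le_self.trans (by norm_num))
  · exact sphere3_hausdorff_lt_top.ne


/-- if `F ⊂ ℝ²` is compact nonempty with `diam F ≤ C₁ℓ`, then
`Cap₁(F × [0,ℓ]) ≥ c(C₁) · ℓ / log(2C₁ℓ / Cap_L(F))`. -/
theorem stmt_5 (C₁ : ℝ) (hC₁ : 1 ≤ C₁) :
    ∃ c : ℝ, 0 < c ∧
      ∀ ℓ : ℝ, 0 < ℓ →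
        ∀ F : Set (EuclideanSpace ℝ (Fin 2)), IsCompact F → F.Nonempty →
          Metric.diam F ≤ C₁ * ℓ →
          ENNReal.ofReal (c * ℓ / Real.log (2 * C₁ * ℓ / logCap F))
            ≤ newtCap 3 (cylSet F ℓ) := by
  have hKne : newtKernelConst 3 ≠ ⊤ := newtKernelConst_three_ne_top
  set k := (newtKernelConst 3).toReal with hk
  have hk0 : 0 ≤ k := ENNReal.toReal_nonneg
  refine ⟨1 / (8 * (k + 1)), by positivity, ?_⟩
  intro ℓ hl F hFc hFne hdiam
  by_cases hVtop : wienerV F = ⊤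
  · rw [logCap, if_pos hVtop, div_zero, Real.log_zero, div_zero, ENNReal.ofReal_zero]
    exact zero_le
  have hD0 : 0 < C₁ * ℓ := by nlinarith
  have hdist : ∀ x ∈ F, ∀ y ∈ F, dist x y ≤ C₁ * ℓ := fun x hx y hy =>
    (dist_le_diam_of_mem hFc.isBounded hx hy).trans hdiam
  have hVlb : ((-Real.log (C₁ * ℓ) : ℝ) : EReal) ≤ wienerV F := wienerV_ge F hD0 hdist
  have hVbot : wienerV F ≠ ⊥ := by
    intro h
    rw [h, le_bot_iff] at hVlb
    exact EReal.coe_ne_bot _ hVlb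
  set v := (wienerV F).toReal with hv
  have hVeq : wienerV F = ((v : ℝ) : EReal) := (EReal.coe_toReal hVtop hVbot).symm
  have hvlb : -Real.log (C₁ * ℓ) ≤ v := by
    rw [hVeq] at hVlb
    exact_mod_cast hVlb
  have hcap : logCap F = Real.exp (-v) := by rw [logCap, if_neg hVtop]
  set L := Real.log (2 * C₁ * ℓ / logCap F) with hL
  have hLeq : L = Real.log (2 * (C₁ * ℓ)) + v := by
    rw [hL, hcap, Real.log_div (by positivity) (Real.exp_ne_zero _), Real.log_exp, mul_assoc]
    ring
  have hlog2 : (0.6931471803 : ℝ) < Real.log 2 := Real.log_two_gt_d9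
  have hL2 : Real.log 2 ≤ L := by
    have he : Real.log 2 = Real.log (2 * (C₁ * ℓ)) + (-Real.log (C₁ * ℓ)) := by
      rw [Real.log_mul (by norm_num) (ne_of_gt hD0)]
      ring
    rw [hLeq, he]
    linarith
  have hLpos : 0 < L := by linarith
  obtain ⟨μ, hPμ, hμ0, hEbound⟩ := exists_cyl_measure hC₁ hl hFc hdiam hVeq
  haveI := hPμ
  have hEnergy : newtEnergy 3 μ ≤ newtKernelConst 3 * ENNReal.ofReal ((4 + 2 * L) / ℓ) := by
    have hexp : ∀ x y : EuclideanSpace ℝ (Fin 3),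
        newtKernelConst 3 * edist x y ^ (-(((3:ℕ) : ℝ) - 2))
          = newtKernelConst 3 * (edist x y)⁻¹ := by
      intro x y
      congr 1
      have : (-(((3:ℕ) : ℝ) - 2)) = (-1 : ℝ) := by norm_num
      rw [this, ENNReal.rpow_neg_one]
    rw [newtEnergy]
    simp_rw [hexp]
    rw [lintegral_congr (fun x => lintegral_const_mul' (newtKernelConst 3) _ hKne),
      lintegral_const_mul' (newtKernelConst 3) _ hKne]
    refine mul_le_mul_right (le_trans hEbound (le_of_eq ?_)) _
    rw [hLeq]
  have hcapge : (newtKernelConst 3 * ENNReal.ofReal ((4 + 2 * L) / ℓ))⁻¹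
      ≤ newtCap 3 (cylSet F ℓ) := by
    rw [newtCap]
    apply ENNReal.inv_le_inv'
    refine le_trans (iInf_le_of_le μ (iInf_le_of_le hPμ (iInf_le_of_le hμ0 le_rfl))) hEnergy
  refine le_trans ?_ hcapge
  rw [ENNReal.le_inv_iff_mul_le]
  have hKeq : newtKernelConst 3 = ENNReal.ofReal k := (ENNReal.ofReal_toReal hKne).symm
  rw [hKeq]
  have hc0 : (0:ℝ) ≤ 1 / (8 * (k + 1)) * ℓ / L := by positivity
  rw [← ENNReal.ofReal_mul hk0, ← ENNReal.ofReal_mul hc0, ← ENNReal.ofReal_one]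
  apply ENNReal.ofReal_le_ofReal
  have h8 : 4 + 2 * L ≤ 8 * L := by nlinarith
  have hmul : k * (4 + 2 * L) ≤ (k + 1) * (8 * L) := by nlinarith
  have hexp : 1 / (8 * (k + 1)) * ℓ / L * (k * ((4 + 2 * L) / ℓ))
      = (k * (4 + 2 * L)) / ((k + 1) * (8 * L)) := by
    field_simp
  rw [hexp, div_le_one (by positivity)]
  exact hmul
end

section
/- Let F ⊂ 𝕊ⁿ ⊂ ℝ^{n+1} be compact (n ≥ 3), let Iℓ ⊂ [1/4, 2] be an interval of length ℓ, and set F̃ = {tx : x ∈ F, t ∈ Iℓ}. Then Cap_{n-1}(F̃) ≥ c(n) · ℓ · Cap_{n-2}(F). Moreover, for any s ∈ Iℓ, x,y ∈ F, t ∈ Iℓ, one has |sx − ty| ≥ c(|x−y| + |s−t|) with an absolute constant c > 0. -/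
open MeasureTheory Metric Set
open scoped NNReal
open scoped ENNReal

/-- The truncated cone `F̃ = {t x : x ∈ F, t ∈ [a,b]}` over a set `F ⊂ 𝕊ⁿ`. -/
def coneSet {m : ℕ} (F : Set (EuclideanSpace ℝ (Fin m))) (a b : ℝ) :
    Set (EuclideanSpace ℝ (Fin m)) :=
  {y | ∃ x ∈ F, ∃ t ∈ Set.Icc a b, y = t • x}

lemma key_ineq {m : ℕ} (x y : EuclideanSpace ℝ (Fin m)) (hx : ‖x‖ = 1) (hy : ‖y‖ = 1)
    {s t : ℝ} (hs : s ∈ Set.Icc (1/4:ℝ) 2) (ht : t ∈ Set.Icc (1/4:ℝ) 2) :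
    (1/6 : ℝ) * (dist x y + |s - t|) ≤ dist (s • x) (t • y) := by
  obtain ⟨hs1, hs2⟩ := hs
  obtain ⟨ht1, ht2⟩ := ht
  have h1 : dist (s • x) (t • y) ^ 2 = (s - t)^2 + s * t * dist x y ^ 2 := by
    rw [dist_eq_norm, dist_eq_norm, norm_sub_sq_real, norm_sub_sq_real]
    simp only [norm_smul, real_inner_smul_left, real_inner_smul_right, Real.norm_eq_abs, hx, hy]
    have hxy : (inner ℝ x y : ℝ) = 1 - ‖x - y‖^2 / 2 := by
      have := norm_sub_sq_real x y
      rw [hx, hy] at this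
      linarith
    rw [hxy]
    have : |s| = s := abs_of_nonneg (by linarith)
    rw [this]
    have : |t| = t := abs_of_nonneg (by linarith)
    rw [this]
    ring
  have hd0 : (0:ℝ) ≤ dist x y := dist_nonneg
  have hD0 : (0:ℝ) ≤ dist (s • x) (t • y) := dist_nonneg
  by_contra hc
  push_neg at hc
  have h2 : dist (s • x) (t • y) * dist (s • x) (t • y) ≤
      ((1/6:ℝ) * (dist x y + |s - t|)) * ((1/6:ℝ) * (dist x y + |s - t|)) :=
    mul_self_le_mul_self hD0 hc.le
  nlinarith [sq_abs (s - t), abs_nonneg (s - t), sq_nonneg (dist x y - |s - t|),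
    mul_le_mul hs1 ht1 (by norm_num) (by linarith : (0:ℝ) ≤ s), sq_nonneg (dist x y)]

lemma coord_abs_le_norm {k : ℕ} (x : EuclideanSpace ℝ (Fin k)) (j : Fin k) : |x j| ≤ ‖x‖ := by
  rw [EuclideanSpace.norm_eq]
  rw [show |x j| = Real.sqrt ((x j)^2) from (Real.sqrt_sq_eq_abs _).symm]
  apply Real.sqrt_le_sqrt
  calc (x j)^2 = ‖x j‖^2 := by rw [Real.norm_eq_abs, sq_abs]
  _ ≤ ∑ i, ‖x i‖^2 :=
      Finset.single_le_sum (f := fun i => ‖x i‖^2) (fun i _ => sq_nonneg _) (Finset.mem_univ j)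

lemma sphere_hausdorff_pos (m : ℕ) (hm : 1 ≤ m) :
    0 < μH[(m : ℝ)] (sphere (0 : EuclideanSpace ℝ (Fin (m+1))) 1) := by
  classical
  set g : EuclideanSpace ℝ (Fin (m+1)) → (Fin m → ℝ) := fun x i => x i.castSucc with hg
  have hlip : LipschitzWith 1 g := by
    apply LipschitzWith.of_dist_le_mul
    intro x y
    rw [NNReal.coe_one, one_mul]
    rw [dist_pi_le_iff dist_nonneg]
    intro i
    rw [Real.dist_eq]
    calc |x i.castSucc - y i.castSucc| ≤ ‖x - y‖ := by
          simpa using coord_abs_le_norm (x - y) i.castSucc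
    _ = dist x y := (dist_eq_norm x y).symm
  have hsub : closedBall (0 : Fin m → ℝ) ((Real.sqrt m)⁻¹) ⊆
      g '' (sphere (0 : EuclideanSpace ℝ (Fin (m+1))) 1) := by
    intro v hv
    have hv' : ∀ i, |v i| ≤ (Real.sqrt m)⁻¹ := by
      intro i
      have := mem_closedBall.1 hv
      rw [dist_pi_le_iff (by positivity)] at this
      simpa [Real.dist_eq] using this i
    have hsum : ∑ i, (v i)^2 ≤ 1 := by
      have hm0 : (0:ℝ) < m := by exact_mod_cast hm
      calc ∑ i, (v i)^2 ≤ ∑ _i : Fin m, ((Real.sqrt m)⁻¹)^2 := by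
            apply Finset.sum_le_sum
            intro i _
            rw [← sq_abs]
            apply pow_le_pow_left₀ (abs_nonneg _) (hv' i)
      _ = m * ((Real.sqrt m)⁻¹)^2 := by simp [mul_comm]
      _ = 1 := by
            rw [inv_pow, Real.sq_sqrt hm0.le]
            field_simp
    set c : ℝ := Real.sqrt (1 - ∑ i, (v i)^2) with hc
    set x : EuclideanSpace ℝ (Fin (m+1)) := WithLp.toLp 2 (Fin.snoc v c : Fin (m+1) → ℝ) with hx
    refine ⟨x, ?_, ?_⟩
    · rw [mem_sphere_zero_iff_norm, EuclideanSpace.norm_eq]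
      rw [show (1:ℝ) = Real.sqrt 1 from (Real.sqrt_one).symm]
      congr 1
      rw [Fin.sum_univ_castSucc]
      have h1 : ∀ i : Fin m, ‖x i.castSucc‖^2 = (v i)^2 := by
        intro i
        simp [hx, Real.norm_eq_abs, sq_abs, Fin.snoc_castSucc]
      have h2 : ‖x (Fin.last m)‖^2 = 1 - ∑ i, (v i)^2 := by
        simp only [hx, WithLp.ofLp_toLp, Fin.snoc_last, Real.norm_eq_abs, sq_abs, hc]
        rw [Real.sq_sqrt (by linarith)]
      rw [Finset.sum_congr rfl (fun i _ => h1 i), h2]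
      ring
    · funext i
      simp [hg, hx, Fin.snoc_castSucc]
  have h1 : μH[(m:ℝ)] (g '' (sphere (0 : EuclideanSpace ℝ (Fin (m+1))) 1)) ≤
      μH[(m:ℝ)] (sphere (0 : EuclideanSpace ℝ (Fin (m+1))) 1) := by
    have := hlip.hausdorffMeasure_image_le (d := (m:ℝ)) (by positivity)
      (sphere (0 : EuclideanSpace ℝ (Fin (m+1))) 1)
    simpa using this
  have h2 : (0:ℝ≥0∞) < μH[(m:ℝ)] (closedBall (0 : Fin m → ℝ) ((Real.sqrt m)⁻¹)) := by
    have hpi : (μH[(m:ℝ)] : Measure (Fin m → ℝ)) = volume := by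
      have := MeasureTheory.hausdorffMeasure_pi_real (ι := Fin m)
      simpa using this
    rw [hpi]
    apply measure_closedBall_pos
    have hm0 : (0:ℝ) < m := by exact_mod_cast hm
    positivity
  calc (0:ℝ≥0∞) < μH[(m:ℝ)] (closedBall (0 : Fin m → ℝ) ((Real.sqrt m)⁻¹)) := h2
  _ ≤ μH[(m:ℝ)] (g '' (sphere (0 : EuclideanSpace ℝ (Fin (m+1))) 1)) := measure_mono hsub
  _ ≤ _ := h1



lemma radial_est {E : Type*} [NormedAddCommGroup E] [NormedSpace ℝ E] (y z : E)
    (hy : 1 ≤ ‖y‖) (hz : 1 ≤ ‖z‖) : ‖‖y‖⁻¹ • y - ‖z‖⁻¹ • z‖ ≤ 2 * ‖y - z‖ := by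
  have hy0 : (0:ℝ) < ‖y‖ := lt_of_lt_of_le one_pos hy
  have hz0 : (0:ℝ) < ‖z‖ := lt_of_lt_of_le one_pos hz
  have hdecomp : ‖y‖⁻¹ • y - ‖z‖⁻¹ • z = ‖y‖⁻¹ • (y - z) + (‖y‖⁻¹ - ‖z‖⁻¹) • z := by
    rw [smul_sub, sub_smul]; abel
  rw [hdecomp]
  have h1 : ‖(‖y‖⁻¹ : ℝ) • (y - z)‖ ≤ ‖y - z‖ := by
    rw [norm_smul, Real.norm_eq_abs, abs_of_pos (inv_pos.2 hy0)]
    nlinarith [norm_nonneg (y - z), inv_le_one_of_one_le₀ hy]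
  have h2 : ‖((‖y‖⁻¹ - ‖z‖⁻¹ : ℝ)) • z‖ ≤ ‖y - z‖ := by
    rw [norm_smul, Real.norm_eq_abs]
    have key : |‖y‖⁻¹ - ‖z‖⁻¹| * ‖z‖ = |‖z‖ - ‖y‖| / ‖y‖ := by
      rw [show ‖y‖⁻¹ - ‖z‖⁻¹ = (‖z‖ - ‖y‖) / (‖y‖ * ‖z‖) by field_simp]
      rw [abs_div, abs_mul, abs_of_pos hy0, abs_of_pos hz0]
      field_simp
    rw [key]
    have habs : |‖z‖ - ‖y‖| ≤ ‖y - z‖ := by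
      rw [abs_sub_comm]
      exact abs_norm_sub_norm_le y z
    calc |‖z‖ - ‖y‖| / ‖y‖ ≤ |‖z‖ - ‖y‖| := div_le_self (abs_nonneg _) hy
    _ ≤ ‖y - z‖ := habs
  calc ‖(‖y‖⁻¹:ℝ) • (y - z) + (‖y‖⁻¹ - ‖z‖⁻¹ : ℝ) • z‖
      ≤ ‖(‖y‖⁻¹:ℝ) • (y - z)‖ + ‖((‖y‖⁻¹ - ‖z‖⁻¹ : ℝ)) • z‖ := norm_add_le _ _
  _ ≤ 2 * ‖y - z‖ := by linarith

section FinSphere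
variable (m : ℕ)

noncomputable def signVal (ε : Bool) : ℝ := if ε then 1 else -1

noncomputable def iotaMap (j : Fin (m+1)) (ε : Bool) (v : Fin m → ℝ) :
    EuclideanSpace ℝ (Fin (m+1)) := WithLp.toLp 2 (Fin.insertNth j (signVal ε) v : Fin (m+1) → ℝ)

noncomputable def GMap (j : Fin (m+1)) (ε : Bool) (v : Fin m → ℝ) :
    EuclideanSpace ℝ (Fin (m+1)) :=
  ‖iotaMap m j ε v‖⁻¹ • iotaMap m j ε v

lemma iota_norm_ge (j : Fin (m+1)) (ε : Bool) (v : Fin m → ℝ) : 1 ≤ ‖iotaMap m j ε v‖ := by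
  have h := coord_abs_le_norm (iotaMap m j ε v) j
  have h2 : (iotaMap m j ε v) j = signVal ε := by
    show (Fin.insertNth j (signVal ε) v : Fin (m+1) → ℝ) j = signVal ε
    rw [Fin.insertNth_apply_same]
  rw [h2] at h
  have h3 : |signVal ε| = 1 := by cases ε <;> simp [signVal]
  linarith

lemma iota_dist_le (j : Fin (m+1)) (ε : Bool) (v w : Fin m → ℝ) :
    ‖iotaMap m j ε v - iotaMap m j ε w‖ ≤ (m+1) * dist v w := by
  have hd0 : (0:ℝ) ≤ dist v w := dist_nonneg
  rw [EuclideanSpace.norm_eq]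
  have hcoord : ∀ k, ‖(iotaMap m j ε v - iotaMap m j ε w) k‖ ^ 2 =
      ((Fin.insertNth j (signVal ε) v : Fin (m+1) → ℝ) k
        - (Fin.insertNth j (signVal ε) w : Fin (m+1) → ℝ) k) ^ 2 := by
    intro k
    rw [Real.norm_eq_abs, sq_abs]
    rw [PiLp.sub_apply]; rfl
  have hsum : ∑ k, ‖(iotaMap m j ε v - iotaMap m j ε w) k‖ ^ 2 ≤ ((m+1) * dist v w)^2 := by
    rw [Finset.sum_congr rfl (fun k _ => hcoord k)]
    rw [Fin.sum_univ_succAbove _ j]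
    rw [Fin.insertNth_apply_same, Fin.insertNth_apply_same, sub_self]
    simp only [Fin.insertNth_apply_succAbove]
    have : ∀ i : Fin m, (v i - w i)^2 ≤ dist v w ^ 2 := by
      intro i
      have h1 : |v i - w i| ≤ dist v w := by
        rw [← Real.dist_eq]
        exact dist_le_pi_dist v w i
      nlinarith [abs_nonneg (v i - w i), sq_abs (v i - w i)]
    calc (0:ℝ)^2 + ∑ i, (v i - w i)^2 ≤ 0 + ∑ _i : Fin m, dist v w ^2 :=
          add_le_add (by norm_num) (Finset.sum_le_sum fun i _ => this i)
      _ ≤ ((m+1) * dist v w)^2 := by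
          rw [Finset.sum_const]
          simp only [Finset.card_univ, Fintype.card_fin, nsmul_eq_mul, zero_add]
          nlinarith [hd0, sq_nonneg (dist v w)]
  calc Real.sqrt (∑ k, ‖(iotaMap m j ε v - iotaMap m j ε w) k‖ ^ 2)
      ≤ Real.sqrt (((m+1) * dist v w)^2) := Real.sqrt_le_sqrt hsum
  _ = (m+1) * dist v w := Real.sqrt_sq (by positivity)

lemma GMap_lipschitz (j : Fin (m+1)) (ε : Bool) :
    LipschitzWith (2*(m+1) : ℝ≥0) (GMap m j ε) := by
  apply LipschitzWith.of_dist_le_mul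
  intro v w
  rw [dist_eq_norm]
  calc ‖GMap m j ε v - GMap m j ε w‖
      ≤ 2 * ‖iotaMap m j ε v - iotaMap m j ε w‖ :=
        radial_est _ _ (iota_norm_ge m j ε v) (iota_norm_ge m j ε w)
  _ ≤ 2 * ((m+1) * dist v w) := by
        have := iota_dist_le m j ε v w
        linarith
  _ = (2*(m+1) : ℝ≥0) * dist v w := by push_cast; ring

lemma sphere_subset_union :
    sphere (0 : EuclideanSpace ℝ (Fin (m+1))) 1 ⊆
      ⋃ (j : Fin (m+1)) (ε : Bool), GMap m j ε '' (closedBall (0 : Fin m → ℝ) 1) := by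
  intro x hx
  rw [mem_sphere_zero_iff_norm] at hx
  obtain ⟨j, hj⟩ := Finite.exists_max (fun i => |x i|)
  have hxj : x j ≠ 0 := by
    intro h0
    have : ∀ i, x i = 0 := by
      intro i
      have := hj i
      rw [h0, abs_zero] at this
      exact abs_eq_zero.1 (le_antisymm this (abs_nonneg _))
    have : x = 0 := by ext i; simpa using this i
    rw [this] at hx; simp at hx
  have hxjpos : 0 < |x j| := abs_pos.2 hxj
  set ε : Bool := decide (0 ≤ x j) with hε
  set v : Fin m → ℝ := fun i => x (j.succAbove i) / |x j| with hv
  have hvQ : v ∈ closedBall (0 : Fin m → ℝ) 1 := by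
    rw [mem_closedBall, dist_pi_le_iff zero_le_one]
    intro i
    rw [Real.dist_eq]
    simp only [Pi.zero_apply, sub_zero]
    show abs (x (j.succAbove i) / abs (x j)) ≤ 1
    rw [abs_div, abs_abs, div_le_one hxjpos]
    exact hj _
  have hiota : iotaMap m j ε v = (|x j|⁻¹ : ℝ) • x := by
    ext k
    rw [PiLp.smul_apply, smul_eq_mul]
    by_cases hk : k = j
    · subst hk
      show (Fin.insertNth k (signVal ε) v : Fin (m+1) → ℝ) k = |x k|⁻¹ * x k
      rw [Fin.insertNth_apply_same]
      rcases lt_or_ge (x k) 0 with h | h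
      · have : ε = false := by simp [hε, not_le.2 h]
        rw [this]
        rw [abs_of_neg h]
        simp [signVal]
        field_simp
      · have : ε = true := by simp [hε, h]
        rw [this]
        rw [abs_of_nonneg h]
        simp [signVal]
        field_simp
    · obtain ⟨i, rfl⟩ := Fin.exists_succAbove_eq hk
      show (Fin.insertNth j (signVal ε) v : Fin (m+1) → ℝ) (j.succAbove i)
        = |x j|⁻¹ * x (j.succAbove i)
      rw [Fin.insertNth_apply_succAbove]
      rw [hv]
      simp [div_eq_inv_mul]
  refine Set.mem_iUnion.2 ⟨j, Set.mem_iUnion.2 ⟨ε, ⟨v, hvQ, ?_⟩⟩⟩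
  rw [GMap, hiota]
  rw [norm_smul, Real.norm_eq_abs, abs_of_pos (inv_pos.2 hxjpos), hx, mul_one, inv_inv]
  rw [smul_smul, mul_inv_cancel₀ (ne_of_gt hxjpos), one_smul]

lemma sphere_hausdorff_lt_top :
    μH[(m : ℝ)] (sphere (0 : EuclideanSpace ℝ (Fin (m+1))) 1) < ⊤ := by
  have hQ : μH[(m:ℝ)] (closedBall (0 : Fin m → ℝ) 1) < ⊤ := by
    have hpi : (μH[(m:ℝ)] : Measure (Fin m → ℝ)) = volume := by
      simpa using MeasureTheory.hausdorffMeasure_pi_real (ι := Fin m)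
    rw [hpi]
    exact (isCompact_closedBall _ _).measure_lt_top
  have hbound : ∀ (j : Fin (m+1)) (ε : Bool),
      μH[(m:ℝ)] (GMap m j ε '' (closedBall (0 : Fin m → ℝ) 1)) < ⊤ := by
    intro j ε
    calc μH[(m:ℝ)] (GMap m j ε '' (closedBall (0 : Fin m → ℝ) 1))
        ≤ (2*(m+1) : ℝ≥0) ^ (m:ℝ) * μH[(m:ℝ)] (closedBall (0 : Fin m → ℝ) 1) :=
          (GMap_lipschitz m j ε).hausdorffMeasure_image_le (by positivity) _
    _ < ⊤ := ENNReal.mul_lt_top (ENNReal.rpow_lt_top_of_nonneg (by positivity) ENNReal.coe_ne_top) hQ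
  calc μH[(m:ℝ)] (sphere (0 : EuclideanSpace ℝ (Fin (m+1))) 1)
      ≤ μH[(m:ℝ)] (⋃ (j : Fin (m+1)) (ε : Bool), GMap m j ε '' (closedBall (0 : Fin m → ℝ) 1)) :=
        measure_mono (sphere_subset_union m)
  _ ≤ ∑' (j : Fin (m+1)), μH[(m:ℝ)] (⋃ (ε : Bool), GMap m j ε '' (closedBall (0 : Fin m → ℝ) 1)) :=
        measure_iUnion_le _
  _ < ⊤ := by
        rw [tsum_fintype]
        apply ENNReal.sum_lt_top.2
        intro j _
        calc μH[(m:ℝ)] (⋃ (ε : Bool), GMap m j ε '' (closedBall (0 : Fin m → ℝ) 1))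
            ≤ ∑' (ε : Bool), μH[(m:ℝ)] (GMap m j ε '' (closedBall (0 : Fin m → ℝ) 1)) :=
              measure_iUnion_le _
        _ < ⊤ := by
              rw [tsum_fintype]
              apply ENNReal.sum_lt_top.2
              intro ε _
              exact hbound j ε

end FinSphere

lemma rpow_neg_anti {x y : ℝ≥0∞} {p : ℝ} (h : x ≤ y) (hp : 0 ≤ p) : y ^ (-p) ≤ x ^ (-p) := by
  rw [ENNReal.rpow_neg, ENNReal.rpow_neg]
  exact ENNReal.inv_le_inv.2 (ENNReal.rpow_le_rpow h hp)

lemma lintegral_tail {p : ℝ} (hp : 2 ≤ p) {d : ℝ} (hd : 0 ≤ d) (s a b : ℝ) :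
    ∫⁻ t in Set.Icc a b, ENNReal.ofReal ((d + |s - t|)/6) ^ (-p) ∂volume
      ≤ ENNReal.ofReal (6^p * (2 + 2/(p-1))) * ENNReal.ofReal d ^ (-(p-1)) := by
  have hp1 : (0:ℝ) < p - 1 := by linarith
  have hC : (0:ℝ) < 6^p * (2 + 2/(p-1)) := by positivity
  rcases eq_or_lt_of_le hd with hd0 | hd0
  · rw [← hd0]
    rw [ENNReal.ofReal_zero, ENNReal.zero_rpow_of_neg (by linarith : -(p-1) < 0)]
    rw [ENNReal.mul_top (by simp [ne_of_gt, ENNReal.ofReal_pos.2 hC])]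
    exact le_top
  set f : ℝ → ℝ≥0∞ := fun u => ENNReal.ofReal ((d + |u|)/6) ^ (-p) with hf
  have hfm : Measurable f :=
    (ENNReal.measurable_ofReal.comp
      ((continuous_const.add continuous_abs).div_const 6).measurable).pow_const _
  have step1 : ∫⁻ t in Set.Icc a b, ENNReal.ofReal ((d + |s - t|)/6) ^ (-p) ∂volume
      ≤ ∫⁻ u, f u ∂volume := by
    calc ∫⁻ t in Set.Icc a b, ENNReal.ofReal ((d + |s - t|)/6) ^ (-p) ∂volume
        ≤ ∫⁻ t, ENNReal.ofReal ((d + |s - t|)/6) ^ (-p) ∂volume :=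
          setLIntegral_le_lintegral _ _
    _ = ∫⁻ u, f u ∂volume :=
          (Measure.measurePreserving_sub_left volume s).lintegral_comp hfm
  have hsplit : ∫⁻ u, f u ∂volume =
      (∫⁻ u in Set.Icc (-d) d, f u ∂volume) + ∫⁻ u in (Set.Icc (-d) d)ᶜ, f u ∂volume :=
    (lintegral_add_compl f measurableSet_Icc).symm
  -- term 1 : the central interval
  have hterm1 : ∫⁻ u in Set.Icc (-d) d, f u ∂volume ≤
      ENNReal.ofReal ((d/6)^(-p) * (2*d)) := by
    have hb : ∀ u, f u ≤ ENNReal.ofReal ((d/6)^(-p)) := by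
      intro u
      rw [← ENNReal.ofReal_rpow_of_pos (by positivity)]
      apply rpow_neg_anti _ (by linarith)
      apply ENNReal.ofReal_le_ofReal
      linarith [abs_nonneg u]
    calc ∫⁻ u in Set.Icc (-d) d, f u ∂volume
        ≤ ∫⁻ _u in Set.Icc (-d) d, ENNReal.ofReal ((d/6)^(-p)) ∂volume :=
          lintegral_mono fun u => hb u
    _ = ENNReal.ofReal ((d/6)^(-p)) * volume (Set.Icc (-d) d) := setLIntegral_const _ _
    _ = ENNReal.ofReal ((d/6)^(-p)) * ENNReal.ofReal (2*d) := by
          rw [Real.volume_Icc]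
          congr 2
          ring
    _ = ENNReal.ofReal ((d/6)^(-p) * (2*d)) := (ENNReal.ofReal_mul (by positivity)).symm
  -- the tail integral over (d, ∞)
  have htail : ∫⁻ u in Set.Ioi d, f u ∂volume ≤ ENNReal.ofReal (6^p * (d^(1-p)/(p-1))) := by
    have hbound : ∫⁻ u in Set.Ioi d, f u ∂volume ≤
        ∫⁻ u in Set.Ioi d, ENNReal.ofReal ((u/6)^(-p)) ∂volume := by
      have e1 : ∫⁻ u in Set.Ioi d, ENNReal.ofReal ((u/6)^(-p)) ∂volume
          = ∫⁻ u in Set.Ioi d, ENNReal.ofReal (u/6) ^ (-p) ∂volume := by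
        apply setLIntegral_congr_fun measurableSet_Ioi
        intro u hu
        have hu' : d < u := hu
        beta_reduce
        rw [ENNReal.ofReal_rpow_of_pos (by linarith : (0:ℝ) < u/6)]
      rw [e1]
      apply setLIntegral_mono
      · exact (ENNReal.measurable_ofReal.comp
          ((continuous_id.div_const 6).measurable)).pow_const _
      · intro u hu
        have hu' : d < u := hu
        apply rpow_neg_anti _ (by linarith)
        apply ENNReal.ofReal_le_ofReal
        have := abs_of_pos (lt_of_le_of_lt hd hu')
        rw [this]
        linarith
    have hInt0 : IntegrableOn (fun u : ℝ => 6^p * u^(-p)) (Set.Ioi d) volume :=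
      (integrableOn_Ioi_rpow_of_lt (by linarith : -p < -1) hd0).const_mul _
    have heq : ∀ u ∈ Set.Ioi d, (6:ℝ)^p * u^(-p) = (u/6)^(-p) := by
      intro u hu
      have hu0 : (0:ℝ) < u := lt_of_le_of_lt hd hu
      rw [Real.div_rpow hu0.le (by norm_num : (0:ℝ) ≤ 6)]
      rw [Real.rpow_neg (by norm_num : (0:ℝ) ≤ 6)]
      field_simp
    have hInt : IntegrableOn (fun u : ℝ => (u/6)^(-p)) (Set.Ioi d) volume :=
      hInt0.congr_fun heq measurableSet_Ioi
    have hval : ∫ u in Set.Ioi d, (u/6)^(-p) ∂volume = 6^p * (d^(1-p)/(p-1)) := by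
      rw [← setIntegral_congr_fun measurableSet_Ioi heq]
      rw [MeasureTheory.integral_const_mul]
      rw [integral_Ioi_rpow_of_lt (by linarith : -p < -1) hd0]
      congr 1
      rw [show -p + 1 = -(p-1) by ring, show (1:ℝ)-p = -(p-1) by ring]
      rw [show -(p-1) = -(p-1) from rfl]
      rw [div_eq_div_iff (by linarith : -(p-1) ≠ 0) (by linarith : p-1 ≠ 0)]
      ring
    calc ∫⁻ u in Set.Ioi d, f u ∂volume
        ≤ ∫⁻ u in Set.Ioi d, ENNReal.ofReal ((u/6)^(-p)) ∂volume := hbound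
    _ = ENNReal.ofReal (∫ u in Set.Ioi d, (u/6)^(-p) ∂volume) :=
        (ofReal_integral_eq_lintegral_ofReal hInt
          ((ae_restrict_iff' measurableSet_Ioi).2 (ae_of_all _ fun u hu =>
            Real.rpow_nonneg (by have := Set.mem_Ioi.1 hu; linarith) _))).symm
    _ = ENNReal.ofReal (6^p * (d^(1-p)/(p-1))) := by rw [hval]
  -- term 2 : the complement
  have hterm2 : ∫⁻ u in (Set.Icc (-d) d)ᶜ, f u ∂volume ≤
      2 * ENNReal.ofReal (6^p * (d^(1-p)/(p-1))) := by
    have hsub : (Set.Icc (-d) d)ᶜ ⊆ Set.Iio (-d) ∪ Set.Ioi d := by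
      intro u hu
      simp only [Set.mem_compl_iff, Set.mem_Icc, not_and_or, not_le] at hu
      rcases hu with h | h
      · exact Or.inl h
      · exact Or.inr h
    have hIio : ∫⁻ u in Set.Iio (-d), f u ∂volume = ∫⁻ u in Set.Ioi d, f u ∂volume := by
      have hmp : MeasurePreserving (fun u : ℝ => -u) volume volume :=
        Measure.measurePreserving_neg volume
      have hemb : MeasurableEmbedding (fun u : ℝ => -u) :=
        (Homeomorph.neg ℝ).measurableEmbedding
      have hpre : (fun u : ℝ => -u) ⁻¹' (Set.Iio (-d)) = Set.Ioi d := by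
        ext u
        simp [Set.mem_Iio, Set.mem_Ioi]
      have := hmp.setLIntegral_comp_preimage_emb hemb f (Set.Iio (-d))
      rw [hpre] at this
      rw [← this]
      apply lintegral_congr
      intro u
      simp [hf, abs_neg]
    calc ∫⁻ u in (Set.Icc (-d) d)ᶜ, f u ∂volume
        ≤ ∫⁻ u in Set.Iio (-d) ∪ Set.Ioi d, f u ∂volume := lintegral_mono_set hsub
    _ ≤ (∫⁻ u in Set.Iio (-d), f u ∂volume) + ∫⁻ u in Set.Ioi d, f u ∂volume :=
        lintegral_union_le _ _ _
    _ = (∫⁻ u in Set.Ioi d, f u ∂volume) + ∫⁻ u in Set.Ioi d, f u ∂volume := by rw [hIio]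
    _ ≤ ENNReal.ofReal (6^p * (d^(1-p)/(p-1))) + ENNReal.ofReal (6^p * (d^(1-p)/(p-1))) :=
        add_le_add htail htail
    _ = 2 * ENNReal.ofReal (6^p * (d^(1-p)/(p-1))) := (two_mul _).symm
  -- combine
  have harith : (d/6)^(-p) * (2*d) + 2 * (6^p * (d^(1-p)/(p-1)))
      = 6^p * (2 + 2/(p-1)) * d^(-(p-1)) := by
    rw [Real.div_rpow hd0.le (by norm_num : (0:ℝ) ≤ 6),
      Real.rpow_neg (by norm_num : (0:ℝ) ≤ 6), Real.rpow_neg hd0.le]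
    have h1 : d^(1-p) = d^(-(p-1)) := by rw [show (1:ℝ)-p = -(p-1) by ring]
    rw [h1, Real.rpow_neg hd0.le]
    have hdp : (0:ℝ) < d ^ p := Real.rpow_pos_of_pos hd0 p
    have hdp1 : (0:ℝ) < d ^ (p-1) := Real.rpow_pos_of_pos hd0 (p-1)
    have hdd : d ^ p = d ^ (p-1) * d := by
      rw [← Real.rpow_add_one (ne_of_gt hd0) (p-1)]
      congr 1
      ring
    field_simp
    rw [hdd]
    ring
  calc ∫⁻ t in Set.Icc a b, ENNReal.ofReal ((d + |s - t|)/6) ^ (-p) ∂volume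
      ≤ ∫⁻ u, f u ∂volume := step1
  _ = (∫⁻ u in Set.Icc (-d) d, f u ∂volume) + ∫⁻ u in (Set.Icc (-d) d)ᶜ, f u ∂volume := hsplit
  _ ≤ ENNReal.ofReal ((d/6)^(-p) * (2*d)) + 2 * ENNReal.ofReal (6^p * (d^(1-p)/(p-1))) :=
      add_le_add hterm1 hterm2
  _ = ENNReal.ofReal ((d/6)^(-p) * (2*d) + 2 * (6^p * (d^(1-p)/(p-1)))) := by
      rw [ENNReal.ofReal_add (by positivity) (by positivity),
        ENNReal.ofReal_mul (by norm_num : (0:ℝ) ≤ 2), ENNReal.ofReal_ofNat]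
  _ = ENNReal.ofReal (6^p * (2 + 2/(p-1)) * d^(-(p-1))) := by rw [harith]
  _ = ENNReal.ofReal (6^p * (2 + 2/(p-1))) * ENNReal.ofReal d ^ (-(p-1)) := by
      rw [ENNReal.ofReal_mul hC.le, ENNReal.ofReal_rpow_of_pos hd0]

lemma kernel_bound {p : ℝ} (hp : 2 ≤ p) {k : ℕ} (x y : EuclideanSpace ℝ (Fin k))
    (hx : ‖x‖ = 1) (hy : ‖y‖ = 1) {a b s : ℝ} (ha : 1/4 ≤ a) (hb : b ≤ 2)
    (hs : s ∈ Set.Icc a b) :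
    ∫⁻ t in Set.Icc a b, edist (s • x) (t • y) ^ (-p) ∂volume
      ≤ ENNReal.ofReal (6^p * (2 + 2/(p-1))) * edist x y ^ (-(p-1)) := by
  have hsub : Set.Icc a b ⊆ Set.Icc (1/4:ℝ) 2 := Set.Icc_subset_Icc ha hb
  have hmono : ∫⁻ t in Set.Icc a b, edist (s • x) (t • y) ^ (-p) ∂volume ≤
      ∫⁻ t in Set.Icc a b, ENNReal.ofReal ((dist x y + |s - t|)/6) ^ (-p) ∂volume := by
    apply setLIntegral_mono
    · exact (ENNReal.measurable_ofReal.comp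
        ((continuous_const.add ((continuous_const.sub continuous_id).abs)).div_const
          6).measurable).pow_const _
    · intro t ht
      apply rpow_neg_anti _ (by linarith)
      rw [edist_dist]
      apply ENNReal.ofReal_le_ofReal
      have hk := key_ineq x y hx hy (hsub hs) (hsub ht)
      calc (dist x y + |s - t|)/6 = (1/6) * (dist x y + |s - t|) := by ring
      _ ≤ dist (s • x) (t • y) := hk
  calc ∫⁻ t in Set.Icc a b, edist (s • x) (t • y) ^ (-p) ∂volume
      ≤ ∫⁻ t in Set.Icc a b, ENNReal.ofReal ((dist x y + |s - t|)/6) ^ (-p) ∂volume := hmono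
  _ ≤ ENNReal.ofReal (6^p * (2 + 2/(p-1))) * ENNReal.ofReal (dist x y) ^ (-(p-1)) :=
      lintegral_tail hp dist_nonneg s a b
  _ = ENNReal.ofReal (6^p * (2 + 2/(p-1))) * edist x y ^ (-(p-1)) := by rw [edist_dist]

noncomputable def CC (m : ℕ) : ℝ≥0∞ :=
  ENNReal.ofReal (6 ^ ((m:ℝ)+2) * (2 + 2 / (((m:ℝ)+2)-1)))

lemma CC_pos (m : ℕ) : 0 < CC m := by
  unfold CC
  apply ENNReal.ofReal_pos.2
  have : (0:ℝ) ≤ (m:ℝ) := Nat.cast_nonneg m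
  have h1 : (0:ℝ) < ((m:ℝ)+2)-1 := by linarith
  positivity

lemma CC_ne_top (m : ℕ) : CC m ≠ ⊤ := ENNReal.ofReal_ne_top

lemma newtKernelConst_pos_ne_top (k : ℕ) (hk : 3 ≤ k) :
    0 < newtKernelConst k ∧ newtKernelConst k ≠ ⊤ := by
  obtain ⟨m, rfl⟩ : ∃ m, k = m + 3 := ⟨k - 3, by omega⟩
  unfold newtKernelConst
  have hsub_pos : (0:ℝ≥0∞) < ((m+3 : ℕ) : ℝ≥0∞) - 2 := by
    apply tsub_pos_of_lt
    exact_mod_cast (by omega : 2 < m+3)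
  have hsub_ne_top : ((m+3 : ℕ) : ℝ≥0∞) - 2 ≠ ⊤ :=
    (tsub_le_self.trans_lt (ENNReal.natCast_lt_top _)).ne
  have hexp : ((m+3:ℕ):ℝ) - 1 = ((m+2:ℕ):ℝ) := by push_cast; ring
  rw [hexp]
  have hpos := sphere_hausdorff_pos (m+2) (by omega)
  have hfin := sphere_hausdorff_lt_top (m+2)
  exact ⟨ENNReal.mul_pos hsub_pos.ne' hpos.ne', ENNReal.mul_ne_top hsub_ne_top hfin.ne⟩

lemma newtEnergy_eq (n : ℕ) {k : ℕ} (μ : Measure (EuclideanSpace ℝ (Fin k))) [SFinite μ] :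
    newtEnergy n μ = newtKernelConst n * ∫⁻ x, ∫⁻ y, edist x y ^ (-((n:ℝ)-2)) ∂μ ∂μ := by
  unfold newtEnergy
  have h1 : ∀ x : EuclideanSpace ℝ (Fin k),
      ∫⁻ y, newtKernelConst n * edist x y ^ (-((n:ℝ)-2)) ∂μ
        = newtKernelConst n * ∫⁻ y, edist x y ^ (-((n:ℝ)-2)) ∂μ := by
    intro x
    have hm : Measurable fun y : EuclideanSpace ℝ (Fin k) => edist x y ^ (-((n:ℝ)-2)) :=
      (continuous_const.edist continuous_id).measurable.pow_const _
    exact lintegral_const_mul _ hm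
  rw [lintegral_congr h1]
  exact lintegral_const_mul _ (Measurable.lintegral_prod_right'
    (continuous_edist.measurable.pow_const _))

lemma double_lintegral_ne_zero {k : ℕ} (μ : Measure (EuclideanSpace ℝ (Fin k)))
    [IsProbabilityMeasure μ] {q : ℝ} (hq : 0 < q) :
    (∫⁻ x, ∫⁻ y, edist x y ^ (-q) ∂μ ∂μ) ≠ 0 := by
  have hpos : ∀ z w : EuclideanSpace ℝ (Fin k), 0 < edist z w ^ (-q) := by
    intro z w
    rcases eq_or_ne (edist z w) 0 with h | h
    · rw [h, ENNReal.zero_rpow_of_neg (by linarith)]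
      simp
    · exact ENNReal.rpow_pos (pos_iff_ne_zero.2 h) (edist_ne_top z w)
  have hinner : ∀ x : EuclideanSpace ℝ (Fin k), 0 < ∫⁻ y, edist x y ^ (-q) ∂μ := by
    intro x
    have hmeas : Measurable fun y : EuclideanSpace ℝ (Fin k) => edist x y ^ (-q) :=
      (continuous_const.edist continuous_id).measurable.pow_const _
    rw [lintegral_pos_iff_support hmeas]
    have hsupp : Function.support (fun y : EuclideanSpace ℝ (Fin k) => edist x y ^ (-q))
        = Set.univ := by
      ext y
      simp [Function.mem_support, (hpos x y).ne']
    rw [hsupp, measure_univ]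
    exact zero_lt_one
  apply ne_of_gt
  have hmeas2 : Measurable fun x : EuclideanSpace ℝ (Fin k) => ∫⁻ y, edist x y ^ (-q) ∂μ :=
    Measurable.lintegral_prod_right' (continuous_edist.measurable.pow_const _)
  rw [lintegral_pos_iff_support hmeas2]
  have hsupp : Function.support (fun x : EuclideanSpace ℝ (Fin k) =>
      ∫⁻ y, edist x y ^ (-q) ∂μ) = Set.univ := by
    ext x
    simp [Function.mem_support, (hinner x).ne']
  rw [hsupp, measure_univ]
  exact zero_lt_one

lemma main_core (m : ℕ) {a b : ℝ} (ha : 1/4 ≤ a) (hb : b ≤ 2) (hab : a < b)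
    (F : Set (EuclideanSpace ℝ (Fin (m+4)))) (hFc : IsCompact F)
    (hFs : F ⊆ sphere (0 : EuclideanSpace ℝ (Fin (m+4))) 1)
    (μ : Measure (EuclideanSpace ℝ (Fin (m+4)))) (hP : IsProbabilityMeasure μ)
    (hμ0 : μ Fᶜ = 0) :
    newtKernelConst (m+3) * (newtKernelConst (m+4) * CC m)⁻¹ * ENNReal.ofReal (b-a)
      * (newtEnergy (m+3) μ)⁻¹ ≤ newtCap (m+4) (coneSet F a b) := by
  haveI := hP
  have hmR : (0:ℝ) ≤ (m:ℝ) := Nat.cast_nonneg m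
  have hq2 : (2:ℝ) ≤ (m:ℝ)+2 := by linarith
  set ℓE := ENNReal.ofReal (b-a) with hℓE
  have hℓ0 : ℓE ≠ 0 := (ENNReal.ofReal_pos.2 (by linarith)).ne'
  have hℓt : ℓE ≠ ⊤ := ENNReal.ofReal_ne_top
  set ρ : Measure ℝ := ℓE⁻¹ • (volume.restrict (Set.Icc a b)) with hρ
  have hρuniv : ρ Set.univ = 1 := by
    rw [hρ, Measure.smul_apply, Measure.restrict_apply_univ, Real.volume_Icc, smul_eq_mul,
      ← hℓE, ENNReal.inv_mul_cancel hℓ0 hℓt]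
  haveI hρP : IsProbabilityMeasure ρ := ⟨hρuniv⟩
  have hρc : ρ ((Set.Icc a b)ᶜ) = 0 := by
    rw [hρ, Measure.smul_apply, Measure.restrict_apply measurableSet_Icc.compl,
      Set.compl_inter_self, measure_empty, smul_eq_mul, mul_zero]
  have hρae : ∀ᵐ s ∂ρ, s ∈ Set.Icc a b := by
    refine ae_iff.2 ?_
    exact hρc
  have hμae : ∀ᵐ x ∂μ, x ∈ sphere (0 : EuclideanSpace ℝ (Fin (m+4))) 1 := by
    refine ae_iff.2 (measure_mono_null ?_ hμ0)
    intro x hx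
    exact fun hxF => hx (hFs hxF)
  have hΦc : Continuous (fun w : (EuclideanSpace ℝ (Fin (m+4))) × ℝ => w.2 • w.1) :=
    continuous_snd.smul continuous_fst
  have hΦ : Measurable (fun w : (EuclideanSpace ℝ (Fin (m+4))) × ℝ => w.2 • w.1) :=
    hΦc.measurable
  set π : Measure ((EuclideanSpace ℝ (Fin (m+4))) × ℝ) := μ.prod ρ with hπ
  set ν : Measure (EuclideanSpace ℝ (Fin (m+4))) :=
    π.map (fun w : (EuclideanSpace ℝ (Fin (m+4))) × ℝ => w.2 • w.1) with hν
  haveI hνP : IsProbabilityMeasure ν := Measure.isProbabilityMeasure_map hΦ.aemeasurable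
  have hcone_eq : coneSet F a b
      = (fun w : (EuclideanSpace ℝ (Fin (m+4))) × ℝ => w.2 • w.1) '' (F ×ˢ Set.Icc a b) := by
    ext z
    constructor
    · rintro ⟨x, hxF, t, ht, rfl⟩
      exact ⟨(x, t), ⟨hxF, ht⟩, rfl⟩
    · rintro ⟨⟨x, t⟩, ⟨hxF, ht⟩, rfl⟩
      exact ⟨x, hxF, t, ht, rfl⟩
  have hconeC : IsCompact (coneSet F a b) := by
    rw [hcone_eq]
    exact (hFc.prod isCompact_Icc).image hΦc
  have hconeM : MeasurableSet (coneSet F a b) := hconeC.isClosed.measurableSet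
  have hν0 : ν ((coneSet F a b)ᶜ) = 0 := by
    rw [hν, Measure.map_apply hΦ hconeM.compl]
    apply measure_mono_null
      (t := (Fᶜ ×ˢ (Set.univ : Set ℝ)) ∪ ((Set.univ : Set (EuclideanSpace ℝ (Fin (m+4)))) ×ˢ (Set.Icc a b)ᶜ))
    · intro w hw
      simp only [Set.mem_preimage, Set.mem_compl_iff] at hw
      by_cases hx : w.1 ∈ F
      · by_cases ht : w.2 ∈ Set.Icc a b
        · exact absurd (⟨w.1, hx, w.2, ht, rfl⟩ : _ ∈ coneSet F a b) hw
        · exact Or.inr ⟨Set.mem_univ _, ht⟩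
      · exact Or.inl ⟨hx, Set.mem_univ _⟩
    · apply measure_union_null
      · rw [Measure.prod_prod, hμ0, zero_mul]
      · rw [Measure.prod_prod, hρc, mul_zero]
  -- kernels
  have hK2 : Measurable (fun z : (EuclideanSpace ℝ (Fin (m+4))) × (EuclideanSpace ℝ (Fin (m+4))) =>
      edist z.1 z.2 ^ (-((m:ℝ)+2))) := continuous_edist.measurable.pow_const _
  set W : EuclideanSpace ℝ (Fin (m+4)) → ℝ≥0∞ :=
    fun x => ∫⁻ y, edist x y ^ (-((m:ℝ)+1)) ∂μ with hW
  have hWm : Measurable W := Measurable.lintegral_prod_right'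
    (continuous_edist.measurable.pow_const _)
  set g : EuclideanSpace ℝ (Fin (m+4)) → ℝ≥0∞ :=
    fun u => ∫⁻ v, edist u v ^ (-((m:ℝ)+2)) ∂ν with hg
  have hgm : Measurable g := Measurable.lintegral_prod_right' hK2
  have hgmap : ∀ u, g u = ∫⁻ y, ∫⁻ t, edist u (t • y) ^ (-((m:ℝ)+2)) ∂ρ ∂μ := by
    intro u
    have hm1 : Measurable fun v : EuclideanSpace ℝ (Fin (m+4)) => edist u v ^ (-((m:ℝ)+2)) :=
      (continuous_const.edist continuous_id).measurable.pow_const _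
    have hm2 : Measurable fun w : (EuclideanSpace ℝ (Fin (m+4))) × ℝ =>
        edist u (w.2 • w.1) ^ (-((m:ℝ)+2)) :=
      (continuous_const.edist (continuous_snd.smul continuous_fst)).measurable.pow_const _
    show ∫⁻ v, edist u v ^ (-((m:ℝ)+2)) ∂ν = _
    rw [hν, lintegral_map hm1 hΦ, lintegral_prod _ hm2.aemeasurable]
  have hJν : ∫⁻ u, g u ∂ν = ∫⁻ x, ∫⁻ s, g (s • x) ∂ρ ∂μ := by
    have hm4 : Measurable fun w : (EuclideanSpace ℝ (Fin (m+4))) × ℝ => g (w.2 • w.1) :=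
      hgm.comp hΦ
    rw [hν, lintegral_map hgm hΦ, hπ, lintegral_prod _ hm4.aemeasurable]
  -- inner estimate
  have hinner : ∀ x ∈ sphere (0 : EuclideanSpace ℝ (Fin (m+4))) 1, ∀ s ∈ Set.Icc a b,
      g (s • x) ≤ ℓE⁻¹ * (CC m * W x) := by
    intro x hx s hs
    rw [hgmap]
    have hyb : ∀ᵐ y ∂μ, (∫⁻ t, edist (s • x) (t • y) ^ (-((m:ℝ)+2)) ∂ρ)
        ≤ ℓE⁻¹ * (CC m * edist x y ^ (-((m:ℝ)+1))) := by
      filter_upwards [hμae] with y hy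
      rw [hρ, lintegral_smul_measure]
      have hkb := kernel_bound (p := (m:ℝ)+2) hq2 x y (mem_sphere_zero_iff_norm.1 hx)
        (mem_sphere_zero_iff_norm.1 hy) ha hb hs
      rw [show -(((m:ℝ)+2)-1) = -((m:ℝ)+1) by ring] at hkb
      exact mul_le_mul_right hkb _
    calc ∫⁻ y, ∫⁻ t, edist (s • x) (t • y) ^ (-((m:ℝ)+2)) ∂ρ ∂μ
        ≤ ∫⁻ y, ℓE⁻¹ * (CC m * edist x y ^ (-((m:ℝ)+1))) ∂μ := lintegral_mono_ae hyb
    _ = ℓE⁻¹ * (CC m * W x) := by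
        have hm3 : Measurable fun y : EuclideanSpace ℝ (Fin (m+4)) =>
            edist x y ^ (-((m:ℝ)+1)) :=
          (continuous_const.edist continuous_id).measurable.pow_const _
        rw [lintegral_const_mul _ (hm3.const_mul _), lintegral_const_mul _ hm3]
  -- main bound
  have hmain : ∫⁻ u, g u ∂ν ≤ ℓE⁻¹ * (CC m * ∫⁻ x, W x ∂μ) := by
    rw [hJν]
    have hxb : ∀ᵐ x ∂μ, (∫⁻ s, g (s • x) ∂ρ) ≤ ℓE⁻¹ * (CC m * W x) := by
      filter_upwards [hμae] with x hx
      calc ∫⁻ s, g (s • x) ∂ρ ≤ ∫⁻ _s, ℓE⁻¹ * (CC m * W x) ∂ρ := by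
            apply lintegral_mono_ae
            filter_upwards [hρae] with s hs
            exact hinner x hx s hs
      _ = ℓE⁻¹ * (CC m * W x) := by rw [lintegral_const, measure_univ, mul_one]
    calc ∫⁻ x, ∫⁻ s, g (s • x) ∂ρ ∂μ ≤ ∫⁻ x, ℓE⁻¹ * (CC m * W x) ∂μ := lintegral_mono_ae hxb
    _ = ℓE⁻¹ * (CC m * ∫⁻ x, W x ∂μ) := by
        rw [lintegral_const_mul _ (hWm.const_mul _), lintegral_const_mul _ hWm]
  set J := ∫⁻ x, W x ∂μ with hJ
  have hEμ : newtEnergy (m+3) μ = newtKernelConst (m+3) * J := by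
    rw [newtEnergy_eq]
    congr 1
    simp only [show ((m+3:ℕ):ℝ) - 2 = (m:ℝ)+1 from by push_cast; ring]
    rfl
  have hEν : newtEnergy (m+4) ν = newtKernelConst (m+4) * ∫⁻ u, g u ∂ν := by
    rw [newtEnergy_eq]
    congr 1
    simp only [show ((m+4:ℕ):ℝ) - 2 = (m:ℝ)+2 from by push_cast; ring]
    rfl
  have hcN := newtKernelConst_pos_ne_top (m+3) (by omega)
  have hcN1 := newtKernelConst_pos_ne_top (m+4) (by omega)
  have hJ0 : J ≠ 0 := double_lintegral_ne_zero μ (by linarith : (0:ℝ) < (m:ℝ)+1)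
  have hEν_le : newtEnergy (m+4) ν ≤ newtKernelConst (m+4) * CC m * ℓE⁻¹ * J := by
    rw [hEν]
    calc newtKernelConst (m+4) * ∫⁻ u, g u ∂ν
        ≤ newtKernelConst (m+4) * (ℓE⁻¹ * (CC m * J)) := mul_le_mul_right hmain _
    _ = newtKernelConst (m+4) * CC m * ℓE⁻¹ * J := by ring
  have hcap : (newtEnergy (m+4) ν)⁻¹ ≤ newtCap (m+4) (coneSet F a b) := by
    rw [newtCap]
    apply ENNReal.inv_le_inv.2
    exact iInf_le_of_le ν (iInf_le_of_le hνP (iInf_le _ hν0))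
  refine le_trans ?_ (le_trans (ENNReal.inv_le_inv.2 hEν_le) hcap)
  rw [hEμ]
  have h1 : (newtKernelConst (m+3) * J)⁻¹ = (newtKernelConst (m+3))⁻¹ * J⁻¹ :=
    ENNReal.mul_inv (Or.inl hcN.1.ne') (Or.inl hcN.2)
  have hB0 : newtKernelConst (m+4) * CC m ≠ 0 :=
    mul_ne_zero hcN1.1.ne' (CC_pos m).ne'
  have hBt : newtKernelConst (m+4) * CC m ≠ ⊤ := ENNReal.mul_ne_top hcN1.2 (CC_ne_top m)
  have hA0 : newtKernelConst (m+4) * CC m * ℓE⁻¹ ≠ 0 :=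
    mul_ne_zero hB0 (ENNReal.inv_ne_zero.2 hℓt)
  have hAt : newtKernelConst (m+4) * CC m * ℓE⁻¹ ≠ ⊤ :=
    ENNReal.mul_ne_top hBt (ENNReal.inv_ne_top.2 hℓ0)
  have h2 : (newtKernelConst (m+4) * CC m * ℓE⁻¹ * J)⁻¹
      = (newtKernelConst (m+4) * CC m * ℓE⁻¹)⁻¹ * J⁻¹ :=
    ENNReal.mul_inv (Or.inl hA0) (Or.inl hAt)
  have h3 : (newtKernelConst (m+4) * CC m * ℓE⁻¹)⁻¹ = (newtKernelConst (m+4) * CC m)⁻¹ * ℓE := by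
    rw [ENNReal.mul_inv (Or.inl hB0) (Or.inl hBt), inv_inv]
  rw [h1, h2, h3]
  have hcancel : newtKernelConst (m+3) * (newtKernelConst (m+3))⁻¹ = 1 :=
    ENNReal.mul_inv_cancel hcN.1.ne' hcN.2
  calc newtKernelConst (m+3) * (newtKernelConst (m+4) * CC m)⁻¹ * ℓE
        * ((newtKernelConst (m+3))⁻¹ * J⁻¹)
      = (newtKernelConst (m+3) * (newtKernelConst (m+3))⁻¹)
        * ((newtKernelConst (m+4) * CC m)⁻¹ * ℓE * J⁻¹) := by ring
  _ = (newtKernelConst (m+4) * CC m)⁻¹ * ℓE * J⁻¹ := by rw [hcancel, one_mul]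
  _ ≤ (newtKernelConst (m+4) * CC m)⁻¹ * ℓE * J⁻¹ := le_rfl

/-- for compact `F ⊂ 𝕊ⁿ` (`n ≥ 3`) and an interval `Iℓ = [a,b] ⊂ [1/4,2]` of
length `ℓ = b - a`, the cone `F̃ = {tx : x ∈ F, t ∈ Iℓ}` satisfies
`Cap_{n-1}(F̃) ≥ c(n) ℓ Cap_{n-2}(F)`; moreover `|sx − ty| ≥ c(|x−y| + |s−t|)` for unit
vectors `x, y` and `s, t ∈ [1/4,2]`, with an absolute constant `c > 0`. -/
theorem stmt_6 :
    (∀ n : ℕ, 3 ≤ n →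
      ∃ c : ℝ≥0∞, 0 < c ∧ c ≠ ⊤ ∧
        ∀ a b : ℝ, 1 / 4 ≤ a → b ≤ 2 → a < b →
          ∀ F : Set (EuclideanSpace ℝ (Fin (n + 1))), IsCompact F →
            F ⊆ sphere (0 : EuclideanSpace ℝ (Fin (n + 1))) 1 →
            c * ENNReal.ofReal (b - a) * newtCap n F ≤ newtCap (n + 1) (coneSet F a b)) ∧
    (∃ c : ℝ, 0 < c ∧
      ∀ (n : ℕ) (x y : EuclideanSpace ℝ (Fin (n + 1))), ‖x‖ = 1 → ‖y‖ = 1 →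
        ∀ s t : ℝ, s ∈ Set.Icc (1 / 4 : ℝ) 2 → t ∈ Set.Icc (1 / 4 : ℝ) 2 →
          c * (dist x y + |s - t|) ≤ dist (s • x) (t • y)) := by
  constructor
  · intro n hn
    obtain ⟨m, rfl⟩ : ∃ m, n = m + 3 := ⟨n - 3, by omega⟩
    have hcN := newtKernelConst_pos_ne_top (m+3) (by omega)
    have hcN1 := newtKernelConst_pos_ne_top (m+4) (by omega)
    refine ⟨newtKernelConst (m+3) * (newtKernelConst (m+4) * CC m)⁻¹, ?_, ?_, ?_⟩
    · exact ENNReal.mul_pos hcN.1.ne'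
        (ENNReal.inv_ne_zero.2 (ENNReal.mul_ne_top hcN1.2 (CC_ne_top m)))
    · exact ENNReal.mul_ne_top hcN.2
        (ENNReal.inv_ne_top.2 (mul_ne_zero hcN1.1.ne' (CC_pos m).ne'))
    · intro a b ha hb hab F hFc hFs
      rw [newtCap]
      simp only [ENNReal.inv_iInf]
      simp only [ENNReal.mul_iSup]
      refine iSup_le fun μ => iSup_le fun hPμ => iSup_le fun hμ0 => ?_
      exact main_core m ha hb hab F hFc hFs μ hPμ hμ0
  · exact ⟨1/6, by norm_num, fun n x y hx hy s t hs ht => key_ineq x y hx hy hs ht⟩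
end

section
/- Let 0 < s < n, let T ⊂ B be a subset of a ball B in a metric space, and let {Δᵢ'}_{i∈I} be a family of pairwise disjoint balls of radii rᵢ centered on ∂B such that T ⊂ ∪ᵢ 5Δᵢ'. Let δ_B(y) = dist(y, ∂B). Then ∫_T δ_B(y)^{n-s} dℋ^s_∞(y) ≤ C(n,s) Σᵢ rᵢⁿ, where the integral with respect to Hausdorff content is the Choquet integral. -/
open MeasureTheory Metric
open scoped ENNReal

/-- The `s`-dimensional Hausdorff content `ℋ^s_∞`. -/
noncomputable def hContent {X : Type*} [EMetricSpace X] (s : ℝ) (E : Set X) : ℝ≥0∞ :=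
  ⨅ (A : ℕ → Set X) (_ : E ⊆ ⋃ i, A i), ∑' i, EMetric.diam (A i) ^ s

/-- Subadditivity of Hausdorff content over a countable cover. -/
lemma hContent_le_cover {X : Type*} [MetricSpace X] {s : ℝ} (hs : 0 < s)
    {ι : Type*} [Countable ι] (B : ι → Set X) {E : Set X} (hE : E ⊆ ⋃ i, B i) :
    hContent s E ≤ ∑' i, EMetric.diam (B i) ^ s := by
  obtain ⟨f, hf⟩ := Countable.exists_injective_nat ι
  set A : ℕ → Set X := fun n => ⋃ (i : ι) (_ : f i = n), B i with hA
  have hAf : ∀ i, A (f i) = B i := by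
    intro i
    apply Set.Subset.antisymm
    · intro x hx
      simp only [hA, Set.mem_iUnion] at hx
      obtain ⟨j, hj, hx⟩ := hx
      rw [hf hj] at hx
      exact hx
    · intro x hx
      exact Set.mem_iUnion.2 ⟨i, Set.mem_iUnion.2 ⟨rfl, hx⟩⟩
  have hcover : E ⊆ ⋃ n, A n := by
    intro x hx
    obtain ⟨i, hxB⟩ := Set.mem_iUnion.1 (hE hx)
    exact Set.mem_iUnion.2 ⟨f i, Set.mem_iUnion.2 ⟨i, Set.mem_iUnion.2 ⟨rfl, hxB⟩⟩⟩
  have h1 : hContent s E ≤ ∑' n, EMetric.diam (A n) ^ s := iInf₂_le A hcover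
  refine h1.trans (le_of_eq ?_)
  have hsupp : Function.support (fun n => EMetric.diam (A n) ^ s) ⊆ Set.range f := by
    intro n hn
    by_contra h
    apply hn
    have hAe : A n = ∅ := by
      ext x
      simp only [hA, Set.mem_iUnion, Set.mem_empty_iff_false, iff_false]
      rintro ⟨i, hi, _⟩
      exact h ⟨i, hi⟩
    simp only [hAe]
    rw [show EMetric.diam (∅ : Set X) = 0 from Metric.ediam_empty, ENNReal.zero_rpow_of_pos hs]
  have h2 := Function.Injective.tsum_eq hf (f := fun n => EMetric.diam (A n) ^ s) hsupp
  rw [← h2]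
  refine (tsum_congr fun i => ?_).symm
  show EMetric.diam (B i) ^ s = EMetric.diam (A (f i)) ^ s
  rw [hAf]

/-- let `0 < s < n`, `T ⊂ B = B(x₀,R)` and `{Δᵢ' = B(zᵢ, rᵢ)}` a family of
pairwise disjoint balls centered on `∂B` with `T ⊆ ⋃ᵢ 5Δᵢ'`.  With `δ_B(y) = dist(y, ∂B)`,
the Choquet integral satisfies `∫_T δ_B(y)^{n-s} dℋ^s_∞(y) ≤ C(n,s) Σᵢ rᵢⁿ`. -/
theorem stmt_8 (n : ℕ) (s : ℝ) (hs : 0 < s) (hsn : s < n) :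
    ∃ C : ℝ≥0∞, C ≠ ⊤ ∧
      ∀ (X : Type*) [MetricSpace X] (x₀ : X) (R : ℝ) (T : Set X)
        (ι : Type) (_ : Countable ι) (z : ι → X) (r : ι → ℝ),
        T ⊆ ball x₀ R →
        (∀ i, z i ∈ sphere x₀ R) →
        (∀ i, 0 < r i) →
        (Pairwise fun i j => Disjoint (ball (z i) (r i)) (ball (z j) (r j))) →
        T ⊆ ⋃ i, ball (z i) (5 * r i) →
        (∫⁻ t in Set.Ioi (0 : ℝ),
            hContent s {y ∈ T | t < Metric.infDist y (sphere x₀ R) ^ ((n : ℝ) - s)})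
          ≤ C * ∑' i, ENNReal.ofReal (r i ^ n) := by
  refine ⟨ENNReal.ofReal ((10 : ℝ) ^ s * 5 ^ ((n : ℝ) - s)), ENNReal.ofReal_ne_top, ?_⟩
  intro X _ x₀ R T ι hι z r hTB hz hr hdisj hcov
  haveI := hι
  have hns : (0 : ℝ) < (n : ℝ) - s := sub_pos.2 hsn
  set c : ι → ℝ := fun i => (5 * r i) ^ ((n : ℝ) - s) with hc
  have hcpos : ∀ i, 0 < c i := fun i => Real.rpow_pos_of_pos (by have := hr i; positivity) _
  set a : ι → ℝ≥0∞ := fun i => ENNReal.ofReal ((10 * r i) ^ s) with ha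
  -- pointwise (in t) covering bound
  have key : ∀ t ∈ Set.Ioi (0 : ℝ),
      hContent s {y ∈ T | t < Metric.infDist y (sphere x₀ R) ^ ((n : ℝ) - s)}
        ≤ ∑' i, Set.indicator (Set.Iio (c i)) (fun _ => a i) t := by
    intro t _
    have hsub : {y ∈ T | t < Metric.infDist y (sphere x₀ R) ^ ((n : ℝ) - s)} ⊆
        ⋃ i : {i : ι // t < c i}, ball (z i.1) (5 * r i.1) := by
      rintro y ⟨hyT, hyt⟩
      obtain ⟨i, hyi⟩ := Set.mem_iUnion.1 (hcov hyT)
      have hδ : Metric.infDist y (sphere x₀ R) ≤ 5 * r i :=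
        (Metric.infDist_le_dist_of_mem (hz i)).trans (mem_ball.1 hyi).le
      have hti : t < c i :=
        lt_of_lt_of_le hyt (Real.rpow_le_rpow Metric.infDist_nonneg hδ hns.le)
      exact Set.mem_iUnion.2 ⟨⟨i, hti⟩, hyi⟩
    refine (hContent_le_cover hs _ hsub).trans ?_
    have hdiam : ∀ i : ι, EMetric.diam (ball (z i) (5 * r i)) ^ s ≤ a i := by
      intro i
      have h1 : EMetric.diam (ball (z i) (5 * r i)) ≤ ENNReal.ofReal (10 * r i) := by
        rw [← Metric.emetric_ball]
        refine EMetric.diam_ball.trans (le_of_eq ?_)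
        rw [show (10 : ℝ) * r i = 2 * (5 * r i) by ring,
          ENNReal.ofReal_mul (by norm_num : (0:ℝ) ≤ 2), ENNReal.ofReal_ofNat]
      calc EMetric.diam (ball (z i) (5 * r i)) ^ s
          ≤ ENNReal.ofReal (10 * r i) ^ s := ENNReal.rpow_le_rpow h1 hs.le
        _ = a i := ENNReal.ofReal_rpow_of_pos (by have := hr i; positivity)
    calc ∑' i : {i : ι // t < c i}, EMetric.diam (ball (z i.1) (5 * r i.1)) ^ s
        ≤ ∑' i : {i : ι // t < c i}, a i.1 := ENNReal.tsum_le_tsum fun i => hdiam i.1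
      _ = ∑' i, Set.indicator {i : ι | t < c i} a i := tsum_subtype {i : ι | t < c i} a
      _ = ∑' i, Set.indicator (Set.Iio (c i)) (fun _ => a i) t := by
          refine tsum_congr fun i => ?_
          simp only [Set.indicator_apply, Set.mem_setOf_eq, Set.mem_Iio]
  have hmeas : ∀ i : ι,
      Measurable (fun t : ℝ => Set.indicator (Set.Iio (c i)) (fun _ => a i) t) :=
    fun i => measurable_const.indicator measurableSet_Iio
  have hint : ∀ i : ι,
      (∫⁻ t in Set.Ioi (0 : ℝ), Set.indicator (Set.Iio (c i)) (fun _ => a i) t)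
        = a i * ENNReal.ofReal (c i) := by
    intro i
    rw [lintegral_indicator measurableSet_Iio, setLIntegral_const,
        Measure.restrict_apply measurableSet_Iio, Set.inter_comm, Set.Ioi_inter_Iio,
        Real.volume_Ioo, sub_zero]
  have hval : ∀ i : ι, a i * ENNReal.ofReal (c i)
      = ENNReal.ofReal ((10 : ℝ) ^ s * 5 ^ ((n : ℝ) - s)) * ENNReal.ofReal (r i ^ n) := by
    intro i
    have hrn : r i ^ s * r i ^ ((n : ℝ) - s) = r i ^ n := by
      rw [← Real.rpow_add (hr i), ← Real.rpow_natCast (r i) n]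
      congr 1
      ring
    have hreal : (10 * r i) ^ s * (5 * r i) ^ ((n : ℝ) - s)
        = (10 : ℝ) ^ s * 5 ^ ((n : ℝ) - s) * r i ^ n := by
      rw [Real.mul_rpow (by norm_num) (hr i).le, Real.mul_rpow (by norm_num) (hr i).le,
          ← hrn]
      ring
    rw [ha, hc]
    rw [← ENNReal.ofReal_mul (by have := hr i; positivity), hreal,
        ENNReal.ofReal_mul (by have := hr i; positivity)]
  calc (∫⁻ t in Set.Ioi (0 : ℝ),
        hContent s {y ∈ T | t < Metric.infDist y (sphere x₀ R) ^ ((n : ℝ) - s)})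
      ≤ ∫⁻ t in Set.Ioi (0 : ℝ), ∑' i, Set.indicator (Set.Iio (c i)) (fun _ => a i) t :=
        setLIntegral_mono' measurableSet_Ioi key
    _ = ∑' i, ∫⁻ t in Set.Ioi (0 : ℝ), Set.indicator (Set.Iio (c i)) (fun _ => a i) t :=
        lintegral_tsum fun i => (hmeas i).aemeasurable
    _ = ∑' i, ENNReal.ofReal ((10 : ℝ) ^ s * 5 ^ ((n : ℝ) - s)) * ENNReal.ofReal (r i ^ n) := by
        refine tsum_congr fun i => ?_
        rw [hint i, hval i]
    _ = ENNReal.ofReal ((10 : ℝ) ^ s * 5 ^ ((n : ℝ) - s)) * ∑' i, ENNReal.ofReal (r i ^ n) :=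
        ENNReal.tsum_mul_left
end
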